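/- arXiv:math/0511619 — 4 statements merged into one kernel-verified Lean document; each statement's English description precedes it below -/
import Mathlib

section
/- Let f ∈ H^1((0,1)) and let f_n := E(f | σ_n) be the conditional expectation of f with respect to the σ-algebra σ_n generated by the intervals [κ/n, (κ+1)/n), κ = 0,...,n−1 (i.e., f_n is the step function taking the mean value of f on each interval). Then limsup_{n→∞} Σ_{κ=0}^{n−2} n·(f_n((κ+1)/n) − f_n(κ/n))^2 ≤ ∫_0^1 |f'(x)|^2 dx. -/
open Set MeasureTheory Filter

private lemma cs_interval {g : ℝ → ℝ} {a b : ℝ} (hab : a ≤ b)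
    (h1 : IntervalIntegrable g volume a b)
    (h2 : IntervalIntegrable (fun x => g x ^ 2) volume a b) :
    (∫ x in a..b, g x) ^ 2 ≤ (b - a) * ∫ x in a..b, (g x) ^ 2 := by
  rcases eq_or_lt_of_le hab with rfl | hlt
  · simp
  have hba : 0 < b - a := sub_pos.mpr hlt
  set I := ∫ x in a..b, g x with hI
  set c : ℝ := I / (b - a) with hc
  have key : (0:ℝ) ≤ ∫ x in a..b, (g x - c) ^ 2 :=
    intervalIntegral.integral_nonneg hab fun _ _ => sq_nonneg _
  have expand : ∫ x in a..b, (g x - c) ^ 2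
      = (∫ x in a..b, (g x) ^ 2) - 2 * c * I + (b - a) * c ^ 2 := by
    have heq : EqOn (fun x => (g x - c) ^ 2)
        (fun x => (g x ^ 2 - 2 * c * g x) + c ^ 2) (uIcc a b) := fun x _ => by ring
    rw [intervalIntegral.integral_congr heq,
      intervalIntegral.integral_add (h2.sub (h1.const_mul (2 * c))) intervalIntegrable_const,
      intervalIntegral.integral_sub h2 (h1.const_mul (2 * c)),
      intervalIntegral.integral_const_mul, intervalIntegral.integral_const]
    simp only [smul_eq_mul, ← hI]

  rw [expand] at key
  have h2c : c * (b - a) = I := by rw [hc, div_mul_cancel₀ _ hba.ne']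
  nlinarith [key, h2c, hba]

/-- For `f ∈ H¹((0,1))` (continuous representative, indefinite integral of its
square-integrable weak derivative `f'`), with `f_n = E(f | σ_n)` the step function of local
averages `f_n(κ/n) = n ∫_{κ/n}^{(κ+1)/n} f`, we have
`limsup_n Σ_{κ=0}^{n-2} n (f_n((κ+1)/n) - f_n(κ/n))² ≤ ∫_0^1 |f'|²`. -/
theorem stmt10 (f f' : ℝ → ℝ)
    (hf' : MeasureTheory.MemLp f' 2 (volume.restrict (Ioo (0:ℝ) 1)))
    (hrep : ∀ x ∈ Icc (0:ℝ) 1, f x = f 0 + ∫ u in (0:ℝ)..x, f' u) :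
    Filter.limsup (fun n : ℕ =>
        ∑ κ ∈ Finset.range (n - 1),
          (n : ℝ) *
            (((n : ℝ) * ∫ t in (((κ : ℝ) + 1)/n)..(((κ : ℝ) + 2)/n), f t) -
              ((n : ℝ) * ∫ t in ((κ : ℝ)/n)..(((κ : ℝ) + 1)/n), f t)) ^ 2) atTop
      ≤ ∫ x in (0:ℝ)..1, (f' x) ^ 2 := by
  set F : ℝ → ℝ := fun x => ∫ u in (0:ℝ)..x, f' u with hF
  set Φ : ℝ → ℝ := fun x => ∫ u in (0:ℝ)..x, f' u ^ 2 with hPhi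
  -- integrability of f' and f'^2 on (0,1)
  have hio : IntegrableOn f' (Ioo (0:ℝ) 1) volume := by
    haveI : IsFiniteMeasure (volume.restrict (Ioo (0:ℝ) 1)) := ⟨by
      rw [Measure.restrict_apply_univ]
      simp [Real.volume_Ioo]⟩
    exact memLp_one_iff_integrable.mp (hf'.mono_exponent (by norm_num))
  have hio2 : IntegrableOn (fun x => f' x ^ 2) (Ioo (0:ℝ) 1) volume := hf'.integrable_sq
  have Ig : ∀ {a b : ℝ}, 0 ≤ a → a ≤ b → b ≤ 1 → IntervalIntegrable f' volume a b := by
    intro a b ha hab hb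
    rw [intervalIntegrable_iff_integrableOn_Ioo_of_le hab]
    exact hio.mono_set fun x hx => ⟨lt_of_le_of_lt ha hx.1, lt_of_lt_of_le hx.2 hb⟩
  have Ig2 : ∀ {a b : ℝ}, 0 ≤ a → a ≤ b → b ≤ 1 →
      IntervalIntegrable (fun x => f' x ^ 2) volume a b := by
    intro a b ha hab hb
    rw [intervalIntegrable_iff_integrableOn_Ioo_of_le hab]
    exact hio2.mono_set fun x hx => ⟨lt_of_le_of_lt ha hx.1, lt_of_lt_of_le hx.2 hb⟩
  -- continuity of the primitives
  have hFc : ContinuousOn F (Icc 0 1) := by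
    have h01 : ((0:ℝ)) ≤ 1 := by norm_num
    have : IntegrableOn f' (uIcc (0:ℝ) 1) volume := by
      rw [uIcc_of_le h01, integrableOn_Icc_iff_integrableOn_Ioo]; exact hio
    simpa [uIcc_of_le h01] using intervalIntegral.continuousOn_primitive_interval this
  have hPhic : ContinuousOn Φ (Icc 0 1) := by
    have h01 : ((0:ℝ)) ≤ 1 := by norm_num
    have : IntegrableOn (fun x => f' x ^ 2) (uIcc (0:ℝ) 1) volume := by
      rw [uIcc_of_le h01, integrableOn_Icc_iff_integrableOn_Ioo]; exact hio2
    simpa [uIcc_of_le h01] using intervalIntegral.continuousOn_primitive_interval this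
  -- interval integrability of the primitives on subintervals of [0,1]
  have FInt : ∀ {p q : ℝ}, 0 ≤ p → p ≤ q → q ≤ 1 → IntervalIntegrable F volume p q := by
    intro p q hp hpq hq
    apply ContinuousOn.intervalIntegrable
    apply hFc.mono
    rw [uIcc_of_le hpq]; exact Icc_subset_Icc hp hq
  have PhiInt : ∀ {p q : ℝ}, 0 ≤ p → p ≤ q → q ≤ 1 → IntervalIntegrable Φ volume p q := by
    intro p q hp hpq hq
    apply ContinuousOn.intervalIntegrable
    apply hPhic.mono
    rw [uIcc_of_le hpq]; exact Icc_subset_Icc hp hq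
  -- difference formulas
  have hFadd : ∀ {s t : ℝ}, 0 ≤ s → s ≤ t → t ≤ 1 →
      F t - F s = ∫ u in s..t, f' u := by
    intro s t hs hst ht
    have h := intervalIntegral.integral_add_adjacent_intervals
      (Ig le_rfl hs (hst.trans ht)) (Ig hs hst ht)
    simp only [hF]
    linarith [h]
  have hPhiadd : ∀ {s t : ℝ}, 0 ≤ s → s ≤ t → t ≤ 1 →
      Φ t - Φ s = ∫ u in s..t, f' u ^ 2 := by
    intro s t hs hst ht
    have h := intervalIntegral.integral_add_adjacent_intervals
      (Ig2 le_rfl hs (hst.trans ht)) (Ig2 hs hst ht)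
    simp only [hPhi]
    linarith [h]
  have hPhinonneg : ∀ {t : ℝ}, 0 ≤ t → t ≤ 1 → 0 ≤ Φ t := by
    intro t ht ht1
    exact intervalIntegral.integral_nonneg ht fun _ _ => sq_nonneg _
  have hPhimono : ∀ {s t : ℝ}, 0 ≤ s → s ≤ t → t ≤ 1 → Φ s ≤ Φ t := by
    intro s t hs hst ht
    have h := hPhiadd hs hst ht
    have h2 : 0 ≤ ∫ u in s..t, f' u ^ 2 :=
      intervalIntegral.integral_nonneg hst fun _ _ => sq_nonneg _
    linarith
  -- the key per-n bound
  have key : ∀ n : ℕ, (∑ κ ∈ Finset.range (n - 1),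
      (n : ℝ) *
        (((n : ℝ) * ∫ t in (((κ : ℝ) + 1)/n)..(((κ : ℝ) + 2)/n), f t) -
          ((n : ℝ) * ∫ t in ((κ : ℝ)/n)..(((κ : ℝ) + 1)/n), f t)) ^ 2) ≤ Φ 1 := by
    intro n
    rcases lt_or_ge n 2 with hn | hn
    · interval_cases n <;> simpa using hPhinonneg (t := 1) (by norm_num) le_rfl
    -- now n ≥ 2
    have hn0 : (0:ℝ) < n := by exact_mod_cast Nat.pos_of_ne_zero (by omega)
    have hn0' : ((n:ℝ)) ≠ 0 := ne_of_gt hn0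
    have hn2 : (2:ℝ) ≤ n := by exact_mod_cast hn
    have h1n : (0:ℝ) < 1/n := by positivity
    -- shifted continuity helpers
    have hFsC : ∀ {p q : ℝ}, 0 ≤ p → q + 1/(n:ℝ) ≤ 1 →
        ContinuousOn (fun s => F (s + 1/(n:ℝ))) (Icc p q) := by
      intro p q hp hq
      apply hFc.comp ((continuous_add_right _).continuousOn)
      intro x hx
      exact ⟨by linarith [hx.1, h1n], by linarith [hx.2]⟩
    have hPhisC : ∀ {p q : ℝ}, 0 ≤ p → q + 1/(n:ℝ) ≤ 1 →
        ContinuousOn (fun s => Φ (s + 1/(n:ℝ))) (Icc p q) := by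
      intro p q hp hq
      apply hPhic.comp ((continuous_add_right _).continuousOn)
      intro x hx
      exact ⟨by linarith [hx.1, h1n], by linarith [hx.2]⟩
    have hPsiC : ∀ {p q : ℝ}, 0 ≤ p → q + 1/(n:ℝ) ≤ 1 →
        ContinuousOn (fun s => Φ (s + 1/(n:ℝ)) - Φ s) (Icc p q) := by
      intro p q hp hq
      exact (hPhisC hp hq).sub (hPhic.mono (Icc_subset_Icc hp (by linarith [h1n])))
    -- per-κ bound
    have hterm : ∀ κ ∈ Finset.range (n - 1),
        (n : ℝ) *
          (((n : ℝ) * ∫ t in (((κ : ℝ) + 1)/n)..(((κ : ℝ) + 2)/n), f t) -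
            ((n : ℝ) * ∫ t in ((κ : ℝ)/n)..(((κ : ℝ) + 1)/n), f t)) ^ 2
        ≤ (n:ℝ) * ∫ s in ((κ:ℝ)/n)..(((κ:ℝ)+1)/n), (Φ (s + 1/n) - Φ s) := by
      intro κ hκ
      have hκn : (κ:ℝ) + 2 ≤ (n:ℝ) := by
        have : κ + 2 ≤ n := by have := Finset.mem_range.mp hκ; omega
        exact_mod_cast this
      set a := (κ:ℝ)/n with ha_def
      set b := ((κ:ℝ)+1)/n with hb_def
      set c := ((κ:ℝ)+2)/n with hc_def
      have hk0 : (0:ℝ) ≤ (κ:ℝ) := Nat.cast_nonneg κ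
      have ha0 : 0 ≤ a := div_nonneg hk0 hn0.le
      have hab : a ≤ b := by rw [ha_def, hb_def]; exact (div_le_div_iff_of_pos_right hn0).mpr (by linarith)
      have hbc : b ≤ c := by rw [hb_def, hc_def]; exact (div_le_div_iff_of_pos_right hn0).mpr (by linarith)
      have hc1 : c ≤ 1 := by rw [hc_def, div_le_one hn0]; exact hκn
      have hb1 : b ≤ 1 := hbc.trans hc1
      have hb0 : 0 ≤ b := ha0.trans hab
      have hba : a + 1/(n:ℝ) = b := by rw [ha_def, hb_def, ← add_div]
      have hcb : b + 1/(n:ℝ) = c := by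
        rw [hb_def, hc_def, ← add_div]; ring_nf
      have hb1' : b + 1/(n:ℝ) ≤ 1 := by rw [hcb]; exact hc1
      have habn : b - a = 1/(n:ℝ) := by rw [ha_def, hb_def, div_sub_div_same]; ring_nf
      -- rewrite ∫ f
      have hfint : ∀ {p q : ℝ}, 0 ≤ p → p ≤ q → q ≤ 1 →
          ∫ t in p..q, f t = (q - p) * f 0 + ∫ t in p..q, F t := by
        intro p q hp hpq hq
        have heq : EqOn f (fun t => f 0 + F t) (uIcc p q) := by
          intro x hx
          rw [uIcc_of_le hpq] at hx
          exact hrep x ⟨hp.trans hx.1, hx.2.trans hq⟩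
        rw [intervalIntegral.integral_congr heq,
          intervalIntegral.integral_add intervalIntegrable_const (FInt hp hpq hq),
          intervalIntegral.integral_const, smul_eq_mul]
      have hFsc : ContinuousOn (fun s => F (s + 1/(n:ℝ))) (Icc a b) := hFsC ha0 hb1'
      have hFcab : ContinuousOn F (Icc a b) := hFc.mono (Icc_subset_Icc ha0 hb1)
      have hDc : ContinuousOn (fun s => F (s + 1/(n:ℝ)) - F s) (Icc a b) := hFsc.sub hFcab
      have hD1 : ((n:ℝ) * ∫ t in b..c, f t) - ((n:ℝ) * ∫ t in a..b, f t)
          = (n:ℝ) * ∫ s in a..b, (F (s + 1/(n:ℝ)) - F s) := by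
        have h2 : (∫ s in a..b, F (s + 1/(n:ℝ))) = ∫ s in b..c, F s := by
          rw [intervalIntegral.integral_comp_add_right, hba, hcb]
        rw [intervalIntegral.integral_sub (hFsc.intervalIntegrable_of_Icc hab)
            (hFcab.intervalIntegrable_of_Icc hab), h2,
          hfint hb0 hbc hc1, hfint ha0 hab hb1]
        have hcbba : c - b = b - a := by linarith [hba, hcb]
        rw [hcbba]; ring
      -- pointwise Cauchy–Schwarz
      have hpt : ∀ s ∈ Icc a b,
          (F (s + 1/(n:ℝ)) - F s)^2 ≤ (1/(n:ℝ)) * (Φ (s + 1/(n:ℝ)) - Φ s) := by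
        intro s hs
        have hs0 : 0 ≤ s := ha0.trans hs.1
        have hs1 : s + 1/(n:ℝ) ≤ 1 := by linarith [hs.2, hb1']
        have hss : s ≤ s + 1/(n:ℝ) := by linarith [h1n]
        rw [hFadd hs0 hss hs1, hPhiadd hs0 hss hs1]
        have := cs_interval hss (Ig hs0 hss hs1) (Ig2 hs0 hss hs1)
        simpa using this
      have hPsicab : ContinuousOn (fun s => Φ (s + 1/(n:ℝ)) - Φ s) (Icc a b) := hPsiC ha0 hb1'
      have hmono4 : (∫ s in a..b, (F (s + 1/(n:ℝ)) - F s)^2)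
          ≤ ∫ s in a..b, (1/(n:ℝ)) * (Φ (s + 1/(n:ℝ)) - Φ s) :=
        intervalIntegral.integral_mono_on hab ((hDc.pow 2).intervalIntegrable_of_Icc hab)
          ((continuousOn_const.mul hPsicab).intervalIntegrable_of_Icc hab) hpt
      have hJ : (∫ s in a..b, (F (s + 1/(n:ℝ)) - F s))^2
          ≤ (b - a) * ∫ s in a..b, (F (s + 1/(n:ℝ)) - F s)^2 :=
        cs_interval hab (hDc.intervalIntegrable_of_Icc hab)
          ((hDc.pow 2).intervalIntegrable_of_Icc hab)
      rw [hD1, intervalIntegral.integral_const_mul] at *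
      set ID := ∫ s in a..b, (F (s + 1/(n:ℝ)) - F s) with hID
      set ID2 := ∫ s in a..b, (F (s + 1/(n:ℝ)) - F s)^2 with hID2
      set IP := ∫ s in a..b, (Φ (s + 1/(n:ℝ)) - Φ s) with hIP
      have hIP0 : 0 ≤ IP := by
        apply intervalIntegral.integral_nonneg hab
        intro s hs
        have hs0 : 0 ≤ s := ha0.trans hs.1
        have hs1 : s + 1/(n:ℝ) ≤ 1 := by linarith [hs.2, hb1']
        have hss : s ≤ s + 1/(n:ℝ) := by linarith [h1n]
        exact sub_nonneg.mpr (hPhimono hs0 hss hs1)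
      rw [habn] at hJ
      calc (n:ℝ) * ((n:ℝ) * ID)^2 = (n:ℝ)^3 * ID^2 := by ring
        _ ≤ (n:ℝ)^3 * ((1/(n:ℝ)) * ID2) := by
            apply mul_le_mul_of_nonneg_left hJ (by positivity)
        _ = (n:ℝ)^2 * ID2 := by field_simp
        _ ≤ (n:ℝ)^2 * ((1/(n:ℝ)) * IP) := by
            apply mul_le_mul_of_nonneg_left hmono4 (by positivity)
        _ = (n:ℝ) * IP := by field_simp
    -- summation
    set d : ℝ := ((n:ℝ)-1)/n with hd_def
    have hd0 : 0 ≤ d := div_nonneg (by linarith) hn0.le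
    have hdh : 1/(n:ℝ) ≤ d := by
      rw [hd_def]; exact (div_le_div_iff_of_pos_right hn0).mpr (by linarith)
    have hd1 : d ≤ 1 := by rw [hd_def, div_le_one hn0]; linarith
    have hdh1 : d + 1/(n:ℝ) = 1 := by rw [hd_def]; field_simp; ring
    have hPsiIntSub : ∀ {p q : ℝ}, 0 ≤ p → p ≤ q → q ≤ d →
        IntervalIntegrable (fun s => Φ (s + 1/(n:ℝ)) - Φ s) volume p q := by
      intro p q hp hpq hq
      exact (hPsiC hp (by linarith)).intervalIntegrable_of_Icc hpq
    have hsum : (∑ κ ∈ Finset.range (n-1),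
          (n:ℝ) * ∫ s in ((κ:ℝ)/n)..(((κ:ℝ)+1)/n), (Φ (s + 1/n) - Φ s))
        = (n:ℝ) * ∫ s in (0:ℝ)..d, (Φ (s + 1/(n:ℝ)) - Φ s) := by
      rw [← Finset.mul_sum]
      congr 1
      have hint : ∀ k < n - 1, IntervalIntegrable (fun s => Φ (s + 1/(n:ℝ)) - Φ s) volume
          ((fun j : ℕ => (j:ℝ)/n) k) ((fun j : ℕ => (j:ℝ)/n) (k+1)) := by
        intro k hk
        have hk1 : ((k:ℝ)+1) ≤ (n:ℝ) - 1 := by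
          have : k + 1 ≤ n - 1 := by omega
          have := (Nat.cast_le (α := ℝ)).mpr this
          push_cast at this
          rw [Nat.cast_sub (by omega)] at this
          · push_cast at this; linarith
        apply hPsiIntSub (div_nonneg (Nat.cast_nonneg k) hn0.le)
          ((div_le_div_iff_of_pos_right hn0).mpr (by push_cast; linarith))
        rw [hd_def]
        apply (div_le_div_iff_of_pos_right hn0).mpr
        push_cast; linarith
      have := intervalIntegral.sum_integral_adjacent_intervals hint
      simp only [Nat.cast_zero, zero_div] at this
      rw [show ∑ κ ∈ Finset.range (n-1), ∫ s in ((κ:ℝ)/n)..(((κ:ℝ)+1)/n), (Φ (s + 1/(n:ℝ)) - Φ s)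
          = ∑ κ ∈ Finset.range (n-1), ∫ s in ((fun j : ℕ => (j:ℝ)/n) κ)..((fun j : ℕ => (j:ℝ)/n) (κ+1)), (Φ (s + 1/(n:ℝ)) - Φ s) from
        Finset.sum_congr rfl (fun κ _ => by push_cast; ring_nf), this]
      congr 1
      rw [hd_def, Nat.cast_sub (by omega), Nat.cast_one]
    -- final bound
    have hPhiIntd : IntervalIntegrable Φ volume d 1 := PhiInt hd0 hd1 le_rfl
    have iψ : (∫ s in (0:ℝ)..d, (Φ (s + 1/(n:ℝ)) - Φ s))
        = (∫ s in d..1, Φ s) - ∫ s in (0:ℝ)..(1/(n:ℝ)), Φ s := by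
      have i1 : (∫ s in (0:ℝ)..d, Φ (s + 1/(n:ℝ))) = ∫ s in (1/(n:ℝ))..1, Φ s := by
        rw [intervalIntegral.integral_comp_add_right, zero_add, hdh1]
      have i2 : (∫ s in (1/(n:ℝ))..1, Φ s)
          = (∫ s in (1/(n:ℝ))..d, Φ s) + ∫ s in d..1, Φ s :=
        (intervalIntegral.integral_add_adjacent_intervals (PhiInt h1n.le hdh hd1) hPhiIntd).symm
      have i3 : (∫ s in (0:ℝ)..d, Φ s)
          = (∫ s in (0:ℝ)..(1/(n:ℝ)), Φ s) + ∫ s in (1/(n:ℝ))..d, Φ s :=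
        (intervalIntegral.integral_add_adjacent_intervals (PhiInt le_rfl h1n.le (hdh.trans hd1))
          (PhiInt h1n.le hdh hd1)).symm
      rw [intervalIntegral.integral_sub
        ((hPhisC le_rfl (by linarith)).intervalIntegrable_of_Icc hd0)
        (PhiInt le_rfl hd0 hd1), i1, i2, i3]
      ring
    have i4 : (∫ s in d..1, Φ s) ≤ (1 - d) * Φ 1 := by
      have := intervalIntegral.integral_mono_on hd1 hPhiIntd intervalIntegrable_const
        (fun x hx => hPhimono (hd0.trans hx.1) hx.2 le_rfl)
      simpa [smul_eq_mul] using this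
    have i5 : 0 ≤ ∫ s in (0:ℝ)..(1/(n:ℝ)), Φ s :=
      intervalIntegral.integral_nonneg h1n.le
        (fun x hx => hPhinonneg hx.1 (hx.2.trans (hdh.trans hd1)))
    have i6 : 1 - d = 1/(n:ℝ) := by rw [hd_def]; field_simp; ring
    calc (∑ κ ∈ Finset.range (n - 1),
        (n : ℝ) *
          (((n : ℝ) * ∫ t in (((κ : ℝ) + 1)/n)..(((κ : ℝ) + 2)/n), f t) -
            ((n : ℝ) * ∫ t in ((κ : ℝ)/n)..(((κ : ℝ) + 1)/n), f t)) ^ 2)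
        ≤ ∑ κ ∈ Finset.range (n-1),
            (n:ℝ) * ∫ s in ((κ:ℝ)/n)..(((κ:ℝ)+1)/n), (Φ (s + 1/n) - Φ s) :=
          Finset.sum_le_sum hterm
      _ = (n:ℝ) * ∫ s in (0:ℝ)..d, (Φ (s + 1/(n:ℝ)) - Φ s) := hsum
      _ = (n:ℝ) * ((∫ s in d..1, Φ s) - ∫ s in (0:ℝ)..(1/(n:ℝ)), Φ s) := by rw [iψ]
      _ ≤ (n:ℝ) * ((1 - d) * Φ 1) :=
          mul_le_mul_of_nonneg_left (by linarith) hn0.le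
      _ = Φ 1 := by rw [i6]; field_simp
  -- conclude via limsup
  have hcob : IsCoboundedUnder (· ≤ ·) atTop (fun n : ℕ =>
      ∑ κ ∈ Finset.range (n - 1),
        (n : ℝ) *
          (((n : ℝ) * ∫ t in (((κ : ℝ) + 1)/n)..(((κ : ℝ) + 2)/n), f t) -
            ((n : ℝ) * ∫ t in ((κ : ℝ)/n)..(((κ : ℝ) + 1)/n), f t)) ^ 2) := by
    apply IsBoundedUnder.isCoboundedUnder_le
    apply isBoundedUnder_of
    exact ⟨0, fun n => Finset.sum_nonneg fun κ _ => by positivity⟩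
  exact Filter.limsup_le_of_le hcob (Eventually.of_forall key)
end

section
/- Let f ∈ L^2(0,1) and let (k_m) be a sequence of nonnegative integers with k_m ≤ m and k_m → ∞. Then there exists a sequence of step functions f_m, each constant on every interval [κ/m,(κ+1)/m) and having at most k_m jumps, such that f_m → f in L^2(0,1). -/
open Set MeasureTheory Filter
open ENNReal

noncomputable def pt (k m : ℕ) (x : ℝ) : ℝ := ((k * ⌊(m:ℝ) * x⌋₊ / m : ℕ) : ℝ) / k

lemma pt_mono (k m : ℕ) : Monotone (pt k m) := by
  intro x y hxy
  unfold pt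
  have h1 : ⌊(m:ℝ) * x⌋₊ ≤ ⌊(m:ℝ) * y⌋₊ :=
    Nat.floor_le_floor (mul_le_mul_of_nonneg_left hxy (by positivity))
  have h2 : (k * ⌊(m:ℝ) * x⌋₊ / m : ℕ) ≤ (k * ⌊(m:ℝ) * y⌋₊ / m : ℕ) :=
    Nat.div_le_div_right (Nat.mul_le_mul_left _ h1)
  have h3 : ((k * ⌊(m:ℝ) * x⌋₊ / m : ℕ) : ℝ) ≤ ((k * ⌊(m:ℝ) * y⌋₊ / m : ℕ) : ℝ) := by
    exact_mod_cast h2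
  gcongr

lemma pt_cell {m : ℕ} (k : ℕ) (hm : m ≠ 0) {κ : ℕ} (hκ : κ < m) {x : ℝ}
    (hx : x ∈ Ico ((κ : ℝ)/m) (((κ : ℝ) + 1)/m)) : pt k m x = pt k m ((κ : ℝ)/m) := by
  have hm' : (0:ℝ) < m := by exact_mod_cast Nat.pos_of_ne_zero hm
  have h1 : ⌊(m:ℝ) * x⌋₊ = κ := by
    rw [Nat.floor_eq_iff (by nlinarith [hx.1, div_nonneg (Nat.cast_nonneg κ) hm'.le])]
    constructor
    · calc (κ:ℝ) = m * ((κ:ℝ)/m) := by field_simp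
        _ ≤ m * x := by nlinarith [hx.1]
    · calc (m:ℝ) * x < m * (((κ:ℝ)+1)/m) := by nlinarith [hx.2]
        _ = (κ:ℝ) + 1 := by field_simp
  have h2 : ⌊(m:ℝ) * ((κ:ℝ)/m)⌋₊ = κ := by
    rw [show (m:ℝ) * ((κ:ℝ)/m) = κ by field_simp]
    exact Nat.floor_natCast κ
  unfold pt; rw [h1, h2]

lemma pt_floor_eq (k m κ : ℕ) (hm : m ≠ 0) : pt k m ((κ : ℝ)/m) = ((k * κ / m : ℕ) : ℝ) / k := by
  have hm' : (0:ℝ) < m := by exact_mod_cast Nat.pos_of_ne_zero hm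
  have h2 : ⌊(m:ℝ) * ((κ:ℝ)/m)⌋₊ = κ := by
    rw [show (m:ℝ) * ((κ:ℝ)/m) = κ by field_simp]
    exact Nat.floor_natCast κ
  unfold pt; rw [h2]

-- closeness
lemma pt_close {k m : ℕ} (hk : k ≠ 0) (hm : m ≠ 0) {x : ℝ} (hx : x ∈ Ico (0:ℝ) 1) :
    pt k m x ≤ x ∧ x - (1/m + 1/k) ≤ pt k m x := by
  have hm' : (0:ℝ) < m := by exact_mod_cast Nat.pos_of_ne_zero hm
  have hk' : (0:ℝ) < k := by exact_mod_cast Nat.pos_of_ne_zero hk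
  set κ := ⌊(m:ℝ) * x⌋₊ with hκ
  have hmx : (0:ℝ) ≤ m * x := by nlinarith [hx.1]
  have hκ1 : (κ:ℝ) ≤ m * x := Nat.floor_le hmx
  have hκ2 : (m:ℝ) * x < κ + 1 := Nat.lt_floor_add_one _
  set j := k * κ / m with hj
  have hjd : k * κ = m * j + (k * κ) % m := (Nat.div_add_mod _ _).symm
  have hmod : (k * κ) % m < m := Nat.mod_lt _ (Nat.pos_of_ne_zero hm)
  have hj1 : (j:ℝ) ≤ (k * κ : ℝ) / m := by
    rw [le_div_iff₀ hm']
    exact_mod_cast Nat.div_mul_le_self (k*κ) m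
  have hj2 : (k * κ : ℝ) / m < j + 1 := by
    rw [div_lt_iff₀ hm']
    push_cast
    have : (k*κ : ℕ) < (j+1) * m := by
      calc k*κ = m*j + (k*κ)%m := hjd
        _ < m*j + m := by omega
        _ = (j+1)*m := by ring
    exact_mod_cast this
  have hpt : pt k m x = (j:ℝ)/k := by unfold pt; rfl
  rw [hpt]
  constructor
  · calc (j:ℝ)/k ≤ ((k*κ:ℝ)/m)/k := by gcongr
      _ = (κ:ℝ)/m := by field_simp
      _ ≤ x := by rw [div_le_iff₀ hm']; linarith
  · have h1 : (κ:ℝ)/m - 1/k ≤ (j:ℝ)/k := by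
      have hj2' : (k:ℝ) * κ < ((j:ℝ)+1) * m := by
        have := (div_lt_iff₀ hm').mp hj2
        push_cast at this ⊢; linarith
      rw [div_sub_div _ _ (ne_of_gt hm') (ne_of_gt hk'), div_le_div_iff₀ (by positivity) hk']
      nlinarith [mul_lt_mul_of_pos_right hj2' hk']
    have h2 : x - 1/m ≤ (κ:ℝ)/m := by
      have hx1 : x ≤ ((κ:ℝ)+1)/m := by rw [le_div_iff₀ hm']; linarith
      rw [show ((κ:ℝ)+1)/m = (κ:ℝ)/m + 1/m by ring] at hx1
      linarith
    linarith

def diagPsi (M : ℕ → ℕ) : ℕ → ℕ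
  | 0 => M 0
  | (n+1) => max (diagPsi M n + 1) (M (n+1))

def diagPhi (psi : ℕ → ℕ) (m : ℕ) : ℕ := Nat.findGreatest (fun n => psi n ≤ m) m

lemma jump_card (g : ℝ → ℝ) (k m : ℕ) :
    ((Finset.range (m - 1)).filter
      (fun κ : ℕ => g (pt k m (((κ : ℝ) + 1)/m)) ≠ g (pt k m ((κ : ℝ)/m)))).card ≤ k := by
  rcases Nat.eq_zero_or_pos m with hm | hm
  · subst hm; simp
  rcases Nat.eq_zero_or_pos k with hk | hk
  · subst hk
    have : ∀ x : ℝ, pt 0 m x = 0 := by intro x; unfold pt; simp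
    simp [this]
  rcases Nat.lt_or_ge m 2 with hm2 | hm2
  · interval_cases m <;> simp [hk]
  have hm0 : m ≠ 0 := by omega
  -- rewrite pt values
  have key : ∀ κ : ℕ, κ ∈ (Finset.range (m - 1)).filter
      (fun κ : ℕ => g (pt k m (((κ : ℝ) + 1)/m)) ≠ g (pt k m ((κ : ℝ)/m))) →
      κ < m - 1 ∧ k * κ / m < k * (κ+1) / m := by
    intro κ hκ
    simp only [Finset.mem_filter, Finset.mem_range] at hκ
    refine ⟨hκ.1, ?_⟩
    have h1 : pt k m (((κ : ℝ) + 1)/m) = ((k * (κ+1) / m : ℕ) : ℝ) / k := by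
      rw [show ((κ:ℝ)+1) = ((κ+1 : ℕ) : ℝ) by push_cast; ring, pt_floor_eq k m (κ+1) hm0]
    have h2 : pt k m ((κ : ℝ)/m) = ((k * κ / m : ℕ) : ℝ) / k := pt_floor_eq k m κ hm0
    rw [h1, h2] at hκ
    have hne : k * (κ+1) / m ≠ k * κ / m := by
      intro h; exact hκ.2 (by rw [h])
    have hle : k * κ / m ≤ k * (κ+1) / m :=
      Nat.div_le_div_right (Nat.mul_le_mul_left _ (by omega))
    omega
  set S := (Finset.range (m - 1)).filter
      (fun κ : ℕ => g (pt k m (((κ : ℝ) + 1)/m)) ≠ g (pt k m ((κ : ℝ)/m))) with hS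
  have mono : ∀ a ∈ S, ∀ b ∈ S, a < b → k * (a+1) / m < k * (b+1) / m := by
    intro a ha b hb hab
    obtain ⟨ha1, ha2⟩ := key a ha
    obtain ⟨hb1, hb2⟩ := key b hb
    have h : k * (a+1) / m ≤ k * b / m :=
      Nat.div_le_div_right (Nat.mul_le_mul_left _ (by omega))
    omega
  calc S.card
      ≤ (Finset.Ico 1 k).card := by
        apply Finset.card_le_card_of_injOn (fun κ => k * (κ+1) / m)
        · intro κ hκ
          obtain ⟨hκ1, hκ2⟩ := key κ hκ
          simp only [Finset.coe_Ico, Set.mem_Ico, Finset.mem_coe, Finset.mem_Ico]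
          refine ⟨(Nat.zero_le _).trans_lt hκ2, ?_⟩
          rw [Nat.div_lt_iff_lt_mul hm]
          exact (Nat.mul_lt_mul_left hk).mpr (by omega)
        · intro a ha b hb hab
          simp only at hab
          rcases lt_trichotomy a b with h | h | h
          · exact absurd hab (mono a ha b hb h).ne
          · exact h
          · exact absurd hab.symm (mono b hb a ha h).ne
      _ ≤ k := by simp

/-- Let `f ∈ L²(0,1)` and `k_m ≤ m` with `k_m → ∞`. Then there are step functions `F m`,
constant on each interval `[κ/m,(κ+1)/m)` and having at most `k_m` jumps, with `F m → f`
in `L²(0,1)`. -/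
theorem stmt15 (f : ℝ → ℝ)
    (hf : MeasureTheory.MemLp f 2 (volume.restrict (Ioo (0:ℝ) 1)))
    (k : ℕ → ℕ) (hk : ∀ m, k m ≤ m) (hk' : Tendsto k atTop atTop) :
    ∃ F : ℕ → ℝ → ℝ,
      (∀ m : ℕ, ∀ κ < m, ∀ x ∈ Ico ((κ : ℝ)/m) (((κ : ℝ) + 1)/m),
        F m x = F m ((κ : ℝ)/m)) ∧
      (∀ m : ℕ, ((Finset.range (m - 1)).filter
        (fun κ : ℕ => F m (((κ : ℝ) + 1)/m) ≠ F m ((κ : ℝ)/m))).card ≤ k m) ∧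
      Tendsto (fun m => ∫ x in Ioo (0:ℝ) 1, (F m x - f x) ^ 2) atTop (nhds 0) := by
  classical
  set μ := volume.restrict (Ioo (0:ℝ) 1) with hμ
  set f' : ℝ → ℝ := (Ioo (0:ℝ) 1).indicator f with hf'def
  have hf' : MemLp f' 2 volume := (memLp_indicator_iff_restrict measurableSet_Ioo).2 hf
  have hff' : f =ᵐ[μ] f' := by
    filter_upwards [ae_restrict_mem measurableSet_Ioo] with x hx
    simp [hf'def, indicator_of_mem hx]
  -- continuous approximations
  have happrox : ∀ n : ℕ, ∃ g : ℝ → ℝ, HasCompactSupport g ∧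
      eLpNorm (f' - g) 2 volume ≤ ENNReal.ofReal (1/(n+1)) ∧ Continuous g := by
    intro n
    obtain ⟨g, h1, h2, h3, _⟩ := hf'.exists_hasCompactSupport_eLpNorm_sub_le
      ENNReal.ofNat_ne_top (ε := ENNReal.ofReal (1/(n+1)))
      (by simp [ENNReal.ofReal_eq_zero]; positivity)
    exact ⟨g, h1, h2, h3⟩
  choose g hg1 hg2 hg3 using happrox
  -- measurability of snapped functions
  have hSmeas : ∀ n km m : ℕ, AEStronglyMeasurable (fun x => g n (pt km m x)) μ :=
    fun n km m => (((hg3 n).measurable.comp (pt_mono km m).measurable)).aestronglyMeasurable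
  -- eLpNorm (g n - f) small
  have hgf : ∀ n : ℕ, eLpNorm (fun x => g n x - f x) 2 μ ≤ ENNReal.ofReal (1/(n+1)) := by
    intro n
    have e1 : (fun x => g n x - f x) =ᵐ[μ] (fun x => g n x - f' x) := by
      filter_upwards [hff'] with x hx; rw [hx]
    rw [eLpNorm_congr_ae e1]
    calc eLpNorm (fun x => g n x - f' x) 2 μ
        ≤ eLpNorm (fun x => g n x - f' x) 2 volume :=
          eLpNorm_mono_measure _ Measure.restrict_le_self
      _ = eLpNorm (f' - g n) 2 volume := by
          rw [show (fun x => g n x - f' x) = -(f' - g n) by funext x; simp [Pi.sub_apply]]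
          rw [eLpNorm_neg]
      _ ≤ ENNReal.ofReal (1/(n+1)) := hg2 n
  -- main eventual estimate
  have claim : ∀ n : ℕ, ∃ M : ℕ, ∀ m ≥ M,
      eLpNorm (fun x => g n (pt (k m) m x) - f x) 2 μ ≤ 2 * ENNReal.ofReal (1/(n+1)) := by
    intro n
    have hU : UniformContinuous (g n) := (hg1 n).uniformContinuous_of_continuous (hg3 n)
    have hε : (0:ℝ) < 1/(n+1) := by positivity
    obtain ⟨δ, hδ, hδ'⟩ := Metric.uniformContinuous_iff.mp hU (1/(n+1)) hε
    have h1 : Tendsto (fun m : ℕ => 1/(m:ℝ) + 1/(k m : ℝ)) atTop (nhds 0) := by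
      have a1 : Tendsto (fun m : ℕ => 1/(m:ℝ)) atTop (nhds 0) :=
        tendsto_one_div_atTop_nhds_zero_nat
      have a2 : Tendsto (fun m : ℕ => 1/(k m : ℝ)) atTop (nhds 0) := a1.comp hk'
      simpa using a1.add a2
    have h5 : ∀ᶠ m : ℕ in atTop, (1/(m:ℝ) + 1/(k m : ℝ) < δ) ∧ 1 ≤ m ∧ 1 ≤ k m :=
      (h1.eventually_lt_const hδ).and ((eventually_ge_atTop 1).and (hk'.eventually_ge_atTop 1))
    rw [eventually_atTop] at h5
    obtain ⟨M, hM5⟩ := h5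
    refine ⟨M, fun m hm => ?_⟩
    obtain ⟨hd, hm1, hk1⟩ := hM5 m hm
    -- pointwise bound on Ioo 0 1
    have hpw : ∀ x ∈ Ioo (0:ℝ) 1, ‖g n (pt (k m) m x) - g n x‖ ≤ 1/(n+1) := by
      intro x hx
      have hx' : x ∈ Ico (0:ℝ) 1 := ⟨le_of_lt hx.1, hx.2⟩
      obtain ⟨hle, hge⟩ := pt_close (k := k m) (m := m) (by omega) (by omega) hx'
      have hdist : dist (pt (k m) m x) x < δ := by
        rw [Real.dist_eq, abs_of_nonpos (by linarith)]
        linarith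
      have := hδ' hdist
      rw [Real.dist_eq] at this
      exact le_of_lt this
    have A1 : AEStronglyMeasurable (fun x => g n (pt (k m) m x) - g n x) μ :=
      (hSmeas n (k m) m).sub (hg3 n).aestronglyMeasurable
    have A2 : AEStronglyMeasurable (fun x => g n x - f x) μ :=
      (hg3 n).aestronglyMeasurable.sub hf.1
    have B1 : eLpNorm (fun x => g n (pt (k m) m x) - g n x) 2 μ ≤ ENNReal.ofReal (1/(n+1)) := by
      have hb : ∀ᵐ x ∂μ, ‖g n (pt (k m) m x) - g n x‖ ≤ 1/(n+1) :=
        ae_restrict_of_forall_mem measurableSet_Ioo hpw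
      refine le_trans (eLpNorm_le_of_ae_bound hb) ?_
      have huniv : μ Set.univ = 1 := by
        rw [hμ, Measure.restrict_apply_univ, Real.volume_Ioo]
        norm_num
      rw [huniv, ENNReal.one_rpow, one_mul]
    have split : (fun x => g n (pt (k m) m x) - f x)
        = (fun x => g n (pt (k m) m x) - g n x) + (fun x => g n x - f x) := by
      funext x; simp only [Pi.add_apply]; ring
    calc eLpNorm (fun x => g n (pt (k m) m x) - f x) 2 μ
        ≤ eLpNorm (fun x => g n (pt (k m) m x) - g n x) 2 μ
          + eLpNorm (fun x => g n x - f x) 2 μ := by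
          rw [split]; exact eLpNorm_add_le A1 A2 one_le_two
      _ ≤ ENNReal.ofReal (1/(n+1)) + ENNReal.ofReal (1/(n+1)) := add_le_add B1 (hgf n)
      _ = 2 * ENNReal.ofReal (1/(n+1)) := (two_mul _).symm
  choose M hM using claim
  -- diagonalization
  set ψ : ℕ → ℕ := diagPsi M with hψdef
  have hψM : ∀ n, M n ≤ ψ n := by intro n; cases n with
    | zero => exact le_refl _
    | succ n => exact le_max_right _ _
  have hψmono : StrictMono ψ := strictMono_nat_of_lt_succ (fun n => lt_of_lt_of_le (Nat.lt_succ_self _) (le_max_left _ _))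
  set φ : ℕ → ℕ := diagPhi ψ with hφdef
  have hφ1 : ∀ m, ψ 0 ≤ m → ψ (φ m) ≤ m := by
    intro m hm
    rw [hφdef]; unfold diagPhi
    exact Nat.findGreatest_spec (P := fun n => ψ n ≤ m) (n := m) (Nat.zero_le m) hm
  have hφ2 : Tendsto φ atTop atTop := by
    rw [tendsto_atTop_atTop]
    intro N
    refine ⟨max (ψ N) N, fun m hm => ?_⟩
    rw [hφdef]; unfold diagPhi
    exact Nat.le_findGreatest (P := fun n => ψ n ≤ m) (n := m) (le_trans (le_max_right _ _) hm) (le_trans (le_max_left _ _) hm)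
  refine ⟨fun m x => g (φ m) (pt (k m) m x), ?_, ?_, ?_⟩
  · intro m κ hκ x hx
    show g (φ m) (pt (k m) m x) = g (φ m) (pt (k m) m ((κ:ℝ)/m))
    rw [pt_cell (k m) (by omega) hκ hx]
  · intro m
    exact jump_card (g (φ m)) (k m) m
  · -- convergence
    have hE : Tendsto (fun m => eLpNorm (fun x => g (φ m) (pt (k m) m x) - f x) 2 μ)
        atTop (nhds 0) := by
      have hbound : Tendsto (fun m => 2 * ENNReal.ofReal (1/(φ m+1))) atTop (nhds 0) := by
        have h1 : Tendsto (fun n : ℕ => 2 * ENNReal.ofReal (1/(n+1))) atTop (nhds 0) := by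
          have h2 : Tendsto (fun n : ℕ => ENNReal.ofReal (1/(n+1))) atTop (nhds 0) := by
            rw [show (0:ℝ≥0∞) = ENNReal.ofReal 0 by simp]
            exact (ENNReal.continuous_ofReal.tendsto 0).comp tendsto_one_div_add_atTop_nhds_zero_nat
          have := ENNReal.Tendsto.const_mul h2 (Or.inr (ENNReal.ofNat_ne_top (n := 2)))
          simpa using this
        exact h1.comp hφ2
      apply tendsto_of_tendsto_of_tendsto_of_le_of_le' tendsto_const_nhds hbound
      · exact Eventually.of_forall (fun m => zero_le)
      · filter_upwards [eventually_ge_atTop (ψ 0)] with m hm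
        exact hM (φ m) m (le_trans (hψM (φ m)) (hφ1 m hm))
    have key : ∀ m : ℕ, ∫ x in Ioo (0:ℝ) 1, (g (φ m) (pt (k m) m x) - f x)^2
        = ((eLpNorm (fun x => g (φ m) (pt (k m) m x) - f x) 2 μ) ^ (2:ℕ)).toReal := by
      intro m
      set h : ℝ → ℝ := fun x => g (φ m) (pt (k m) m x) - f x with hh
      have hA : AEStronglyMeasurable h μ := (hSmeas (φ m) (k m) m).sub hf.1
      have h2A : AEStronglyMeasurable (fun x => (h x)^2) μ :=
        (continuous_pow 2).comp_aestronglyMeasurable hA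
      rw [show ∫ x in Ioo (0:ℝ) 1, (g (φ m) (pt (k m) m x) - f x)^2 = ∫ x, (h x)^2 ∂μ from rfl]
      rw [integral_eq_lintegral_of_nonneg_ae (ae_of_all _ fun x => sq_nonneg _) h2A]
      congr 1
      have hlint : ∫⁻ x, ENNReal.ofReal ((h x)^2) ∂μ = ∫⁻ x, ‖h x‖ₑ ^ (2:ℝ) ∂μ := by
        apply lintegral_congr; intro x
        rw [← sq_abs, ENNReal.ofReal_pow (abs_nonneg _), ← Real.enorm_eq_ofReal_abs,
          ← ENNReal.rpow_natCast]
        norm_num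
      rw [hlint, eLpNorm_eq_lintegral_rpow_enorm_toReal two_ne_zero ENNReal.ofNat_ne_top]
      rw [← ENNReal.rpow_natCast _ 2, ← ENNReal.rpow_mul]
      norm_num
    show Tendsto (fun m => ∫ x in Ioo (0:ℝ) 1, (g (φ m) (pt (k m) m x) - f x)^2) atTop (nhds 0)
    have hpow : Tendsto (fun m => (eLpNorm (fun x => g (φ m) (pt (k m) m x) - f x) 2 μ) ^ (2:ℕ))
        atTop (nhds 0) := by
      have := ((ENNReal.continuous_pow 2).tendsto 0).comp hE
      simpa [Function.comp_def] using this
    have hfin := (ENNReal.tendsto_toReal (by simp : (0:ℝ≥0∞) ≠ ⊤)).comp hpow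
    simp only [ENNReal.toReal_zero] at hfin
    exact Tendsto.congr (fun m => (key m).symm) hfin
end

section
/- Let Δ be a negative semidefinite self-adjoint operator on a Hilbert space with discrete spectrum 0 = λ_0 > λ_1 ≥ λ_2 ≥ ... and spectral projections E_s. For μ > 0 define f(μ) := −μ² (Δ − μ²)^{-1} g for fixed g, and f(0) := E_0 g. Then for all μ, μ' ≥ 0, ‖f(μ) − f(μ')‖ ≤ (‖g‖ / |λ_1|) · |μ² − μ'²|; i.e., μ ↦ f(μ) is Lipschitz in μ² with constant ‖g‖ divided by the spectral gap. -/
open scoped InnerProductSpace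

private lemma pyth17 {H : Type*} [NormedAddCommGroup H] [InnerProductSpace ℝ H]
    (w : ℕ → H) (h : ∀ i j : ℕ, i ≠ j → ⟪w i, w j⟫_ℝ = 0) (F : Finset ℕ) :
    ‖∑ s ∈ F, w s‖ ^ 2 = ∑ s ∈ F, ‖w s‖ ^ 2 := by
  rw [← real_inner_self_eq_norm_sq, sum_inner]
  refine Finset.sum_congr rfl fun i hi => ?_
  rw [inner_sum, Finset.sum_eq_single_of_mem i hi (fun j _ hji => h i j (Ne.symm hji)),
    real_inner_self_eq_norm_sq]

private lemma partial_bound17 {H : Type*} [NormedAddCommGroup H] [InnerProductSpace ℝ H]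
    (v : ℕ → H) (horth : ∀ i j : ℕ, i ≠ j → ⟪v i, v j⟫_ℝ = 0)
    (c : ℕ → ℝ) (C : ℝ) (hC : 0 ≤ C) (hc : ∀ s, |c s| ≤ C) (F : Finset ℕ) :
    ‖∑ s ∈ F, c s • v s‖ ≤ C * ‖∑ s ∈ F, v s‖ := by
  have horth' : ∀ i j : ℕ, i ≠ j → ⟪c i • v i, c j • v j⟫_ℝ = 0 := by
    intro i j hij
    rw [real_inner_smul_left, real_inner_smul_right, horth i j hij]
    ring
  have h1 : ‖∑ s ∈ F, c s • v s‖ ^ 2 ≤ (C * ‖∑ s ∈ F, v s‖) ^ 2 := by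
    rw [pyth17 _ horth' F, mul_pow, pyth17 _ horth F, Finset.mul_sum]
    refine Finset.sum_le_sum fun s _ => ?_
    rw [norm_smul, mul_pow, Real.norm_eq_abs]
    have : |c s| ^ 2 ≤ C ^ 2 := pow_le_pow_left₀ (abs_nonneg _) (hc s) 2
    exact mul_le_mul_of_nonneg_right this (by positivity)
  have := Real.sqrt_le_sqrt h1
  rwa [Real.sqrt_sq (norm_nonneg _), Real.sqrt_sq (by positivity)] at this

private lemma summable_smul17 {H : Type*} [NormedAddCommGroup H] [InnerProductSpace ℝ H]
    [CompleteSpace H] (v : ℕ → H) (g : H)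
    (horth : ∀ i j : ℕ, i ≠ j → ⟪v i, v j⟫_ℝ = 0) (hsum : HasSum v g)
    (c : ℕ → ℝ) (C : ℝ) (hC : 0 ≤ C) (hc : ∀ s, |c s| ≤ C) :
    Summable (fun s => c s • v s) := by
  rw [summable_iff_vanishing]
  intro e he
  obtain ⟨ε, hε, hball⟩ := Metric.mem_nhds_iff.mp he
  obtain ⟨s0, hs0⟩ := (summable_iff_vanishing.mp hsum.summable)
    (Metric.ball 0 (ε / (C + 1))) (Metric.ball_mem_nhds _ (by positivity))
  refine ⟨s0, fun t ht => hball ?_⟩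
  have h1 := hs0 t ht
  rw [Metric.mem_ball, dist_zero_right] at h1 ⊢
  calc ‖∑ s ∈ t, c s • v s‖ ≤ C * ‖∑ s ∈ t, v s‖ := partial_bound17 v horth c C hC hc t
    _ ≤ C * (ε / (C + 1)) := mul_le_mul_of_nonneg_left h1.le hC
    _ < ε := by rw [mul_div_assoc', div_lt_iff₀ (by positivity)]; nlinarith

private lemma tsum_bound17 {H : Type*} [NormedAddCommGroup H] [InnerProductSpace ℝ H]
    [CompleteSpace H] (v : ℕ → H) (g : H)
    (horth : ∀ i j : ℕ, i ≠ j → ⟪v i, v j⟫_ℝ = 0) (hsum : HasSum v g)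
    (c : ℕ → ℝ) (C : ℝ) (hC : 0 ≤ C) (hc : ∀ s, |c s| ≤ C) :
    ‖∑' s, c s • v s‖ ≤ C * ‖g‖ := by
  obtain ⟨x, hx⟩ := summable_smul17 v g horth hsum c C hC hc
  rw [hx.tsum_eq]
  exact le_of_tendsto_of_tendsto' hx.norm ((hsum.norm).const_mul C)
    (fun F => partial_bound17 v horth c C hC hc F)

/-- Lipschitz dependence of the partition solver on `μ`: let `Δ` be a negative semidefinite
self-adjoint operator with discrete spectrum `0 = λ 0 > λ 1 ≥ λ 2 ≥ ...`, let `v s = E_s g`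
be the spectral components of a fixed vector `g` (pairwise orthogonal, summing to `g`), and
define, via the spectral decomposition of `f(μ) = -μ²(Δ - μ²)⁻¹ g` (with `f 0 = E₀ g`),
`f μ = v 0 + Σ_{s ≥ 1} μ²/(μ² - λ s) • v s`.  Then for all `μ, μ' ≥ 0`,
`‖f μ - f μ'‖ ≤ (‖g‖ / |λ 1|) |μ² - μ'²|`. -/
theorem stmt17 {H : Type*} [NormedAddCommGroup H] [InnerProductSpace ℝ H] [CompleteSpace H]
    (g : H) (v : ℕ → H) (lam : ℕ → ℝ)
    (hlam0 : lam 0 = 0) (hlam1 : lam 1 < 0)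
    (hmono : ∀ s : ℕ, 1 ≤ s → lam (s + 1) ≤ lam s)
    (horth : ∀ i j : ℕ, i ≠ j → ⟪v i, v j⟫_ℝ = 0)
    (hsum : HasSum v g)
    (f : ℝ → H)
    (hf : ∀ μ : ℝ, f μ = v 0 + ∑' s : ℕ,
      (if s = 0 then (0:ℝ) else μ ^ 2 / (μ ^ 2 - lam s)) • v s) :
    ∀ μ μ' : ℝ, 0 ≤ μ → 0 ≤ μ' →
      ‖f μ - f μ'‖ ≤ (‖g‖ / |lam 1|) * |μ ^ 2 - μ' ^ 2| := by
  intro μ μ' hμ hμ'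
  have hle : ∀ s : ℕ, 1 ≤ s → lam s ≤ lam 1 := by
    intro s hs
    obtain ⟨n, rfl⟩ : ∃ n, s = n + 1 := ⟨s - 1, by omega⟩
    clear hs
    induction n with
    | zero => exact le_refl _
    | succ m ih => exact (hmono (m + 1) (by omega)).trans ih
  have hpos : ∀ (ν : ℝ) (s : ℕ), 1 ≤ s → 0 < ν ^ 2 - lam s := by
    intro ν s hs
    have h1 : lam s ≤ lam 1 := hle s hs
    nlinarith [sq_nonneg ν]
  have hbd1 : ∀ (ν : ℝ) (s : ℕ),
      |if s = 0 then (0:ℝ) else ν ^ 2 / (ν ^ 2 - lam s)| ≤ 1 := by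
    intro ν s
    by_cases h : s = 0
    · simp [h]
    · have hs : 1 ≤ s := Nat.one_le_iff_ne_zero.mpr h
      have hA := hpos ν s hs
      have h1 : lam s ≤ lam 1 := hle s hs
      rw [if_neg h, abs_div, abs_of_nonneg (sq_nonneg ν), abs_of_pos hA, div_le_one hA]
      nlinarith
  have hsa := summable_smul17 v g horth hsum _ 1 zero_le_one (hbd1 μ)
  have hsa' := summable_smul17 v g horth hsum _ 1 zero_le_one (hbd1 μ')
  set C : ℝ := |μ ^ 2 - μ' ^ 2| / |lam 1| with hCdef
  have hC : 0 ≤ C := by positivity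
  have hd : ∀ s : ℕ,
      |(if s = 0 then (0:ℝ) else μ ^ 2 / (μ ^ 2 - lam s)) -
        (if s = 0 then (0:ℝ) else μ' ^ 2 / (μ' ^ 2 - lam s))| ≤ C := by
    intro s
    by_cases h : s = 0
    · simpa [h] using hC
    · have hs : 1 ≤ s := Nat.one_le_iff_ne_zero.mpr h
      have hA := hpos μ s hs
      have hB := hpos μ' s hs
      have h1 : lam s ≤ lam 1 := hle s hs
      have hlt : lam s < 0 := lt_of_le_of_lt h1 hlam1
      rw [if_neg h, if_neg h]
      have heq : μ ^ 2 / (μ ^ 2 - lam s) - μ' ^ 2 / (μ' ^ 2 - lam s) =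
          (-lam s) * (μ ^ 2 - μ' ^ 2) / ((μ ^ 2 - lam s) * (μ' ^ 2 - lam s)) := by
        field_simp
        ring
      rw [heq, hCdef, abs_div, abs_mul, abs_of_pos (mul_pos hA hB),
        abs_of_pos (neg_pos.mpr hlt), abs_of_neg hlam1,
        div_le_div_iff₀ (mul_pos hA hB) (neg_pos.mpr hlam1)]
      have hA' : -lam s ≤ μ ^ 2 - lam s := by nlinarith [sq_nonneg μ]
      have hB' : -lam 1 ≤ μ' ^ 2 - lam s := by nlinarith [sq_nonneg μ']
      have hmm : (-lam s) * (-lam 1) ≤ (μ ^ 2 - lam s) * (μ' ^ 2 - lam s) :=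
        mul_le_mul hA' hB' (by linarith) hA.le
      nlinarith [mul_le_mul_of_nonneg_left hmm (abs_nonneg (μ ^ 2 - μ' ^ 2))]
  have heq2 : f μ - f μ' = ∑' s : ℕ,
      ((if s = 0 then (0:ℝ) else μ ^ 2 / (μ ^ 2 - lam s)) -
        (if s = 0 then (0:ℝ) else μ' ^ 2 / (μ' ^ 2 - lam s))) • v s := by
    rw [hf μ, hf μ', add_sub_add_left_eq_sub, ← Summable.tsum_sub hsa hsa']
    exact tsum_congr fun s => (sub_smul _ _ _).symm
  rw [heq2]
  calc ‖∑' s : ℕ, ((if s = 0 then (0:ℝ) else μ ^ 2 / (μ ^ 2 - lam s)) -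
        (if s = 0 then (0:ℝ) else μ' ^ 2 / (μ' ^ 2 - lam s))) • v s‖
      ≤ C * ‖g‖ := tsum_bound17 v g horth hsum _ C hC hd
    _ = (‖g‖ / |lam 1|) * |μ ^ 2 - μ' ^ 2| := by rw [hCdef]; ring
end

section
/- Let f = t + F ∈ SBV_2([0,1]) with t a right-continuous step function having j(t) < ∞ jumps of minimal jump height δ > 0, and F ∈ H^1((0,1)) (continuous representative). Fix parameters γ > 0, μ > 0 and suppose γ_n → γ, μ_n → μ. Then there exists a sequence f_n of step functions, f_n constant on each interval [κ/n,(κ+1)/n), with f_n → f in L^2(0,1) and limsup_{n→∞} Σ_{κ=0}^{n−2} min{ (n/μ_n²)(f_n((κ+1)/n) − f_n(κ/n))², γ_n } ≤ γ·j(t) + μ^{-2} ∫_0^1 |f'(x)|² dx. -/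
open Set MeasureTheory Filter

private lemma div_le_div_same_pos {a b c : ℝ} (h : a ≤ b) (hc : 0 < c) : a / c ≤ b / c := by
  rw [div_le_div_iff₀ hc hc]
  exact mul_le_mul_of_nonneg_right h hc.le

private lemma cs_aux {g : ℝ → ℝ} {a b : ℝ} (hab : a ≤ b)
    (h2 : MemLp g 2 (volume.restrict (Ioc a b))) :
    (∫ x in Ioc a b, g x) ^ 2 ≤ (b - a) * ∫ x in Ioc a b, (g x) ^ 2 := by
  set μ := volume.restrict (Ioc a b) with hμdef
  haveI : IsFiniteMeasure μ := by
    constructor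
    rw [hμdef, Measure.restrict_apply_univ]
    exact measure_Ioc_lt_top
  have hconj : (2:ℝ).HolderConjugate 2 := Real.HolderConjugate.two_two
  have hf : MemLp (fun x => |g x|) (ENNReal.ofReal 2) μ := by
    have := h2.norm
    simpa [Real.norm_eq_abs, ENNReal.ofReal_ofNat] using this
  have hg : MemLp (fun _ : ℝ => (1:ℝ)) (ENNReal.ofReal 2) μ := memLp_const _
  have H := integral_mul_le_Lp_mul_Lq_of_nonneg hconj
      (ae_of_all _ fun x => abs_nonneg (g x)) (ae_of_all _ fun _ => zero_le_one) hf hg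
  have e1 : ∫ x, |g x| * 1 ∂μ = ∫ x, |g x| ∂μ := by simp
  have e2 : ∫ x, |g x| ^ (2:ℝ) ∂μ = ∫ x, (g x) ^ 2 ∂μ := by
    refine integral_congr_ae (ae_of_all _ fun x => ?_)
    show |g x| ^ (2:ℝ) = (g x) ^ 2
    rw [show (2:ℝ) = ((2:ℕ):ℝ) by norm_num, Real.rpow_natCast, sq_abs]
  have e3 : ∫ _x, (1:ℝ) ^ (2:ℝ) ∂μ = b - a := by
    simp [hμdef, Real.volume_Ioc, ENNReal.toReal_ofReal (sub_nonneg.2 hab), hab]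
  rw [e1, e2, e3] at H
  set A := ∫ x, (g x) ^ 2 ∂μ with hA
  have hA0 : 0 ≤ A := integral_nonneg fun x => sq_nonneg _
  have hL0 : (0:ℝ) ≤ b - a := sub_nonneg.2 hab
  have habs : |∫ x, g x ∂μ| ≤ ∫ x, |g x| ∂μ := by
    simpa [Real.norm_eq_abs] using norm_integral_le_integral_norm (μ := μ) g
  have hrpow : ∀ x : ℝ, 0 ≤ x → (x ^ ((1:ℝ)/2)) ^ (2:ℕ) = x := by
    intro x hx
    rw [← Real.rpow_natCast (x ^ ((1:ℝ)/2)) 2, ← Real.rpow_mul hx]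
    norm_num
  calc (∫ x, g x ∂μ) ^ 2 = |∫ x, g x ∂μ| ^ 2 := (sq_abs _).symm
    _ ≤ (A ^ ((1:ℝ)/2) * (b - a) ^ ((1:ℝ)/2)) ^ 2 :=
        pow_le_pow_left₀ (abs_nonneg _) (habs.trans H) 2
    _ = A * (b - a) := by rw [mul_pow, hrpow _ hA0, hrpow _ hL0]
    _ = (b - a) * A := mul_comm _ _

/-- Recovery (limsup) sequence for the Blake–Zisserman penalty: let `f = t + F ∈ SBV₂([0,1])`
with `t` a right-continuous step function whose jumps are the finite set `S ⊂ (0,1)`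
(so `j(t) = |S|`), each jump of height at least `δ > 0`, and `F ∈ H¹((0,1))` (continuous
representative, indefinite integral of the square-integrable weak derivative `f'`).
If `γ_n → γ > 0` and `μ_n → μ > 0`, then there are step functions `f_n`, constant on each
`[κ/n,(κ+1)/n)`, with `f_n → f` in `L²(0,1)` and
`limsup_n Σ_{κ=0}^{n-2} min{ (n/μ_n²)(f_n((κ+1)/n) - f_n(κ/n))², γ_n }
  ≤ γ j(t) + μ⁻² ∫_0^1 |f'|²`. -/
theorem stmt19 (t F f' : ℝ → ℝ) (S : Finset ℝ) (δ : ℝ) (hδ : 0 < δ)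
    (hS : ∀ s ∈ S, s ∈ Ioo (0:ℝ) 1)
    (hstep : ∀ x y : ℝ, x ∈ Icc (0:ℝ) 1 → y ∈ Icc (0:ℝ) 1 → x ≤ y →
      (∀ s ∈ S, ¬ (x < s ∧ s ≤ y)) → t x = t y)
    (hjump : ∀ s ∈ S, ∀ᶠ x in nhdsWithin s (Iio s), δ ≤ |t s - t x|)
    (hf' : MeasureTheory.MemLp f' 2 (volume.restrict (Ioo (0:ℝ) 1)))
    (hF : ∀ x ∈ Icc (0:ℝ) 1, F x = F 0 + ∫ u in (0:ℝ)..x, f' u)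
    (γ μ : ℝ) (hγ : 0 < γ) (hμ : 0 < μ)
    (γs μs : ℕ → ℝ)
    (hγs : Tendsto γs atTop (nhds γ)) (hμs : Tendsto μs atTop (nhds μ)) :
    ∃ fn : ℕ → ℝ → ℝ,
      (∀ n : ℕ, ∀ κ < n, ∀ x ∈ Ico ((κ : ℝ)/n) (((κ : ℝ) + 1)/n),
        fn n x = fn n ((κ : ℝ)/n)) ∧
      Tendsto (fun n => ∫ x in Ioo (0:ℝ) 1, (fn n x - (t x + F x)) ^ 2) atTop (nhds 0) ∧
      Filter.limsup (fun n : ℕ =>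
          ∑ κ ∈ Finset.range (n - 1),
            min (((n : ℝ)/(μs n) ^ 2) * (fn n (((κ : ℝ) + 1)/n) - fn n ((κ : ℝ)/n)) ^ 2)
              (γs n)) atTop
        ≤ γ * S.card + μ⁻¹ ^ 2 * ∫ x in (0:ℝ)..1, (f' x) ^ 2 := by
  classical
  -- the indefinite integral of f'
  set G : ℝ → ℝ := fun x => F 0 + ∫ u in (0:ℝ)..x, f' u with hGdef
  haveI instFin : IsFiniteMeasure (volume.restrict (Ioo (0:ℝ) 1)) := by
    constructor
    rw [Measure.restrict_apply_univ]
    exact measure_Ioo_lt_top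
  have hf'int : IntegrableOn f' (Ioo (0:ℝ) 1) := hf'.integrable one_le_two
  have hsqint : IntegrableOn (fun x => f' x ^ 2) (Ioo (0:ℝ) 1) := hf'.integrable_sq
  -- grid point membership
  have hfloor_mem : ∀ (n : ℕ) (x : ℝ), x ∈ Ioo (0:ℝ) 1 →
      ((⌊(n:ℝ)*x⌋:ℝ)/n) ∈ Icc (0:ℝ) 1 ∧ ((⌊(n:ℝ)*x⌋:ℝ)/n) ≤ x := by
    intro n x hx
    rcases Nat.eq_zero_or_pos n with h0 | hn
    · subst h0
      have : ((0:ℕ):ℝ) = 0 := by norm_num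
      rw [this]
      norm_num
      exact hx.1.le
    · have hn' : (0:ℝ) < n := Nat.cast_pos.mpr hn
      have h1 : (0:ℝ) ≤ (⌊(n:ℝ)*x⌋:ℝ) := by
        exact_mod_cast Int.floor_nonneg.2 (mul_nonneg (Nat.cast_nonneg n) hx.1.le)
      have h2 : ((⌊(n:ℝ)*x⌋:ℝ)/n) ≤ x := by
        rw [div_le_iff₀ hn']
        calc (⌊(n:ℝ)*x⌋:ℝ) ≤ (n:ℝ)*x := Int.floor_le _
          _ = x * n := mul_comm _ _
      exact ⟨⟨by positivity, h2.trans hx.2.le⟩, h2⟩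
  -- value of the floor at rational grid points
  have hfn_grid : ∀ (n : ℕ), 0 < n → ∀ κ : ℕ,
      ((⌊(n:ℝ) * ((κ:ℝ)/n)⌋:ℝ)/n) = (κ:ℝ)/n := by
    intro n hn κ
    have hn' : (n:ℝ) ≠ 0 := by exact_mod_cast hn.ne'
    have h : (n:ℝ) * ((κ:ℝ)/n) = (κ:ℝ) := by field_simp
    rw [h]
    norm_num
  -- structure of the step function t
  have hstar : ∀ x ∈ Icc (0:ℝ) 1, ∃ y, y ∈ insert (0:ℝ) S ∧ y ∈ Icc (0:ℝ) 1 ∧ y ≤ x ∧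
      (∀ s ∈ S, s ≤ x → s ≤ y) ∧ t x = t y := by
    intro x hx
    set P := insert (0:ℝ) (S.filter (· ≤ x)) with hP
    have hPne : P.Nonempty := ⟨0, Finset.mem_insert_self _ _⟩
    set y := P.max' hPne with hy
    have hyP : y ∈ P := P.max'_mem hPne
    have hy_le : ∀ z ∈ P, z ≤ y := fun z hz => P.le_max' z hz
    have hyx : y ≤ x := by
      rcases Finset.mem_insert.1 hyP with h | h
      · rw [h]; exact hx.1
      · exact (Finset.mem_filter.1 h).2
    have hy0 : (0:ℝ) ≤ y := hy_le 0 (Finset.mem_insert_self _ _)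
    have hyIcc : y ∈ Icc (0:ℝ) 1 := ⟨hy0, hyx.trans hx.2⟩
    have hymem : y ∈ insert (0:ℝ) S := by
      rcases Finset.mem_insert.1 hyP with h | h
      · exact Finset.mem_insert.2 (Or.inl h)
      · exact Finset.mem_insert.2 (Or.inr (Finset.mem_filter.1 h).1)
    have hdom : ∀ s ∈ S, s ≤ x → s ≤ y := fun s hs hsx =>
      hy_le s (Finset.mem_insert.2 (Or.inr (Finset.mem_filter.2 ⟨hs, hsx⟩)))
    refine ⟨y, hymem, hyIcc, hyx, hdom, (hstep y x hyIcc hx hyx ?_).symm⟩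
    rintro s hs ⟨h1, h2⟩
    exact absurd (hdom s hs h2) (not_le.2 h1)
  -- bound for t on [0,1]
  obtain ⟨Ct, ht_bd⟩ : ∃ C : ℝ, ∀ x ∈ Icc (0:ℝ) 1, |t x| ≤ C := by
    refine ⟨((insert (0:ℝ) S).image fun y => |t y|).max'
      (Finset.Nonempty.image ⟨0, Finset.mem_insert_self _ _⟩ _), fun x hx => ?_⟩
    obtain ⟨y, hy, _, _, _, hxy⟩ := hstar x hx
    rw [hxy]
    exact Finset.le_max' _ _ (Finset.mem_image_of_mem (fun y => |t y|) hy)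
  -- continuity of G on [0,1]
  have hGint : IntegrableOn f' (Icc (0:ℝ) 1) := by
    rw [integrableOn_Icc_iff_integrableOn_Ioo]
    exact hf'int
  have hGcont : ContinuousOn G (Icc (0:ℝ) 1) := by
    have h1 : ContinuousOn (fun x => ∫ u in (0:ℝ)..x, f' u) (Icc (0:ℝ) 1) := by
      have h2 : IntegrableOn f' (uIcc (0:ℝ) 1) := by rwa [uIcc_of_le zero_le_one]
      have := intervalIntegral.continuousOn_primitive_interval (a := (0:ℝ)) (b := 1)
        (μ := volume) (f := f') h2
      rwa [uIcc_of_le zero_le_one] at this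
    exact continuousOn_const.add h1
  -- F agrees with G on [0,1]
  have hFG : ∀ x ∈ Icc (0:ℝ) 1, F x = G x := hF
  -- bound for F on [0,1]
  have hfabsint : IntegrableOn (fun x => |f' x|) (Ioo (0:ℝ) 1) := by
    simpa [Real.norm_eq_abs, IntegrableOn] using hf'int.norm
  obtain ⟨CF, hF_bd⟩ : ∃ C : ℝ, ∀ x ∈ Icc (0:ℝ) 1, |F x| ≤ C := by
    refine ⟨|F 0| + ∫ x in Ioo (0:ℝ) 1, |f' x|, fun x hx => ?_⟩
    rw [hF x hx]
    refine (abs_add_le _ _).trans (add_le_add le_rfl ?_)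
    rw [intervalIntegral.integral_of_le hx.1]
    have step1 : |∫ u in Ioc (0:ℝ) x, f' u| ≤ ∫ u in Ioc (0:ℝ) x, |f' u| := by
      simpa [Real.norm_eq_abs] using
        norm_integral_le_integral_norm (μ := volume.restrict (Ioc (0:ℝ) x)) f'
    refine step1.trans (setIntegral_mono_set hfabsint
      (ae_of_all _ fun y => abs_nonneg (f' y)) ?_)
    rw [MeasureTheory.ae_le_set]
    have hsub : Ioc (0:ℝ) x \ Ioo 0 1 ⊆ {(1:ℝ)} := by
      intro y hy
      have h1 : y ∈ Ioc (0:ℝ) x := hy.1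
      have h2 : y ∉ Ioo (0:ℝ) 1 := hy.2
      have : y = 1 := le_antisymm (h1.2.trans hx.2) (by
        by_contra hlt
        exact h2 ⟨h1.1, lt_of_not_ge hlt⟩)
      exact this
    exact measure_mono_null hsub Real.volume_singleton
  -- measurable representative of t
  set m : ℝ → ℝ := fun s => if h : (S.filter (fun z => s < z)).Nonempty
    then (S.filter (fun z => s < z)).min' h else 2 with hmdef
  set T : ℝ → ℝ := fun x => ∑ s ∈ insert (0:ℝ) S, (Ico s (m s)).indicator (fun _ => t s) x
    with hTdef
  have hT : ∀ x ∈ Icc (0:ℝ) 1, T x = t x := by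
    intro x hx
    obtain ⟨y, hymem, hyIcc, hyx, hdom, htx⟩ := hstar x hx
    have hxmem : x ∈ Ico y (m y) := by
      refine ⟨hyx, ?_⟩
      simp only [hmdef]
      by_cases hne : (S.filter (fun z => y < z)).Nonempty
      · rw [dif_pos hne]
        set s' := (S.filter (fun z => y < z)).min' hne with hs'
        have hs'mem := (S.filter (fun z => y < z)).min'_mem hne
        have hs'S : s' ∈ S := (Finset.mem_filter.1 hs'mem).1
        have hys' : y < s' := (Finset.mem_filter.1 hs'mem).2
        by_contra hc
        exact absurd (hdom s' hs'S (le_of_not_gt hc)) (not_le.2 hys')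
      · rw [dif_neg hne]
        exact lt_of_le_of_lt hx.2 one_lt_two
    have hzero : ∀ s ∈ insert (0:ℝ) S, s ≠ y →
        (Ico s (m s)).indicator (fun _ => t s) x = 0 := by
      intro s hsmem hsne
      rw [Set.indicator_of_notMem]
      intro hxs
      rcases lt_or_gt_of_ne hsne with hlt | hgt
      · -- s < y : then m s ≤ y ≤ x, contradicting x < m s
        have hyS : y ∈ S := by
          rcases Finset.mem_insert.1 hymem with h | h
          · exfalso
            have hs0 : (0:ℝ) ≤ s := by
              rcases Finset.mem_insert.1 hsmem with h' | h'
              · exact h'.ge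
              · exact (hS s h').1.le
            rw [h] at hlt
            exact absurd hlt (not_lt.2 hs0)
          · exact h
        have hne : (S.filter (fun z => s < z)).Nonempty :=
          ⟨y, Finset.mem_filter.2 ⟨hyS, hlt⟩⟩
        have hms : m s ≤ y := by
          simp only [hmdef]
          rw [dif_pos hne]
          exact Finset.min'_le _ _ (Finset.mem_filter.2 ⟨hyS, hlt⟩)
        exact lt_irrefl x (lt_of_lt_of_le hxs.2 (hms.trans hyx))
      · -- y < s : then s ∈ S, s ≤ x, so s ≤ y, contradiction
        have hsS : s ∈ S := by
          rcases Finset.mem_insert.1 hsmem with h | h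
          · exfalso
            have : (0:ℝ) ≤ y := hyIcc.1
            rw [h] at hgt
            exact absurd hgt (not_lt.2 this)
          · exact h
        exact absurd (hdom s hsS hxs.1) (not_le.2 hgt)
    have hsingle : T x = (Ico y (m y)).indicator (fun _ => t y) x :=
      Finset.sum_eq_single_of_mem y hymem hzero
    rw [hsingle, Set.indicator_of_mem hxmem, htx]
  have hTmeas : Measurable T := by
    rw [hTdef]
    exact Finset.measurable_sum _ fun s _ =>
      (measurable_const.indicator measurableSet_Ico)
  have htm : AEStronglyMeasurable t (volume.restrict (Ioo (0:ℝ) 1)) := by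
    refine ⟨T, hTmeas.stronglyMeasurable, ?_⟩
    exact (MeasureTheory.ae_restrict_iff' measurableSet_Ioo).2
      (ae_of_all _ fun x hx => (hT x (Ioo_subset_Icc_self hx)).symm)
  have hFm : AEStronglyMeasurable F (volume.restrict (Ioo (0:ℝ) 1)) := by
    have h1 : AEStronglyMeasurable G (volume.restrict (Ioo (0:ℝ) 1)) := by
      exact ContinuousOn.aestronglyMeasurable (μ := volume)
        (hGcont.mono Ioo_subset_Icc_self) measurableSet_Ioo
    refine h1.congr ?_
    exact (MeasureTheory.ae_restrict_iff' measurableSet_Ioo).2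
      (ae_of_all _ fun x hx => (hFG x (Ioo_subset_Icc_self hx)).symm)
  have hfnm : ∀ n : ℕ, Measurable (fun x : ℝ => t ((⌊(n:ℝ)*x⌋:ℝ)/n) + F ((⌊(n:ℝ)*x⌋:ℝ)/n)) := by
    intro n
    have h1 : Measurable fun x : ℝ => ⌊(n:ℝ)*x⌋ :=
      Int.measurable_floor.comp (measurable_id.const_mul _)
    exact (measurable_of_countable
      (fun k : ℤ => t ((k:ℝ)/n) + F ((k:ℝ)/n))).comp h1
  -- the uniform bound
  have hfbd : ∀ x ∈ Icc (0:ℝ) 1, |t x + F x| ≤ Ct + CF := fun x hx =>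
    (abs_add_le _ _).trans (add_le_add (ht_bd x hx) (hF_bd x hx))
  refine ⟨fun n x => t ((⌊(n:ℝ)*x⌋:ℝ)/n) + F ((⌊(n:ℝ)*x⌋:ℝ)/n), ?_, ?_, ?_⟩
  · -- step function property
    intro n κ hκ x hx
    show t ((⌊(n:ℝ)*x⌋:ℝ)/n) + F ((⌊(n:ℝ)*x⌋:ℝ)/n)
      = t ((⌊(n:ℝ)*((κ:ℝ)/n)⌋:ℝ)/n) + F ((⌊(n:ℝ)*((κ:ℝ)/n)⌋:ℝ)/n)
    have hn : 0 < n := Nat.pos_of_ne_zero (by omega)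
    have hn' : (0:ℝ) < n := Nat.cast_pos.mpr hn
    have hgrid := hfn_grid n hn κ
    have hfloor : (⌊(n:ℝ)*x⌋ : ℤ) = (κ:ℤ) := by
      rw [Int.floor_eq_iff]
      constructor
      · push_cast
        have h := hx.1
        rw [div_le_iff₀ hn'] at h
        calc ((κ:ℝ)) ≤ x * n := h
          _ = (n:ℝ) * x := mul_comm _ _
      · push_cast
        have h := hx.2
        rw [lt_div_iff₀ hn'] at h
        calc (n:ℝ) * x = x * n := mul_comm _ _
          _ < (κ:ℝ) + 1 := h
    have h1 : ((⌊(n:ℝ)*x⌋:ℝ)/n) = (κ:ℝ)/n := by rw [hfloor]; push_cast; ring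
    rw [h1, hgrid]
  · -- L² convergence
    set B : ℝ := (2*(Ct + CF))^2 with hBdef
    have hmeas : ∀ n : ℕ, AEStronglyMeasurable
        (fun x => (t ((⌊(n:ℝ)*x⌋:ℝ)/n) + F ((⌊(n:ℝ)*x⌋:ℝ)/n) - (t x + F x)) ^ 2)
        (volume.restrict (Ioo (0:ℝ) 1)) := by
      intro n
      have base : AEStronglyMeasurable
          (fun x => t ((⌊(n:ℝ)*x⌋:ℝ)/n) + F ((⌊(n:ℝ)*x⌋:ℝ)/n) - (t x + F x))
          (volume.restrict (Ioo (0:ℝ) 1)) :=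
        ((hfnm n).aestronglyMeasurable).sub (htm.add hFm)
      have := base.mul base
      refine this.congr (ae_of_all _ fun x => ?_)
      simp only [Pi.mul_apply]
      ring
    have h_bound : ∀ n : ℕ, ∀ᵐ x ∂(volume.restrict (Ioo (0:ℝ) 1)),
        ‖(t ((⌊(n:ℝ)*x⌋:ℝ)/n) + F ((⌊(n:ℝ)*x⌋:ℝ)/n) - (t x + F x)) ^ 2‖ ≤ B := by
      intro n
      refine (MeasureTheory.ae_restrict_iff' measurableSet_Ioo).2
        (ae_of_all _ fun x hx => ?_)
      have hg := (hfloor_mem n x hx).1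
      have h1 : |t ((⌊(n:ℝ)*x⌋:ℝ)/n) + F ((⌊(n:ℝ)*x⌋:ℝ)/n)| ≤ Ct + CF := hfbd _ hg
      have h2 : |t x + F x| ≤ Ct + CF := hfbd x (Ioo_subset_Icc_self hx)
      set d := t ((⌊(n:ℝ)*x⌋:ℝ)/n) + F ((⌊(n:ℝ)*x⌋:ℝ)/n) - (t x + F x) with hd
      have habs : |d| ≤ 2*(Ct + CF) := by
        rw [hd]
        calc |t ((⌊(n:ℝ)*x⌋:ℝ)/n) + F ((⌊(n:ℝ)*x⌋:ℝ)/n) - (t x + F x)|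
            ≤ |t ((⌊(n:ℝ)*x⌋:ℝ)/n) + F ((⌊(n:ℝ)*x⌋:ℝ)/n)| + |t x + F x| := abs_sub _ _
          _ ≤ (Ct + CF) + (Ct + CF) := add_le_add h1 h2
          _ = 2*(Ct + CF) := by ring
      have : d^2 ≤ B := by
        rw [hBdef, ← sq_abs d]
        exact pow_le_pow_left₀ (abs_nonneg d) habs 2
      rw [Real.norm_eq_abs, abs_of_nonneg (sq_nonneg d)]
      exact this
    have hSnull : (volume : Measure ℝ) (↑S : Set ℝ) = 0 :=
      (S.countable_toSet).measure_zero _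
    have h_lim : ∀ᵐ x ∂(volume.restrict (Ioo (0:ℝ) 1)),
        Tendsto (fun n : ℕ => (t ((⌊(n:ℝ)*x⌋:ℝ)/n) + F ((⌊(n:ℝ)*x⌋:ℝ)/n) - (t x + F x)) ^ 2)
          atTop (nhds 0) := by
      have ae1 : ∀ᵐ x ∂(volume.restrict (Ioo (0:ℝ) 1)), x ∈ Ioo (0:ℝ) 1 :=
        ae_restrict_mem measurableSet_Ioo
      have ae2 : ∀ᵐ x ∂(volume.restrict (Ioo (0:ℝ) 1)), x ∉ (↑S : Set ℝ) :=
        ae_restrict_of_ae (measure_eq_zero_iff_ae_notMem.1 hSnull)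
      filter_upwards [ae1, ae2] with x hx hxS
      -- the grid points converge to x from below
      have hgr_le : ∀ n : ℕ, ((⌊(n:ℝ)*x⌋:ℝ)/n) ≤ x := fun n => (hfloor_mem n x hx).2
      have hgr_Icc : ∀ n : ℕ, ((⌊(n:ℝ)*x⌋:ℝ)/n) ∈ Icc (0:ℝ) 1 := fun n => (hfloor_mem n x hx).1
      have hgr_lb : ∀ n : ℕ, 1 ≤ n → x - 1/n ≤ ((⌊(n:ℝ)*x⌋:ℝ)/n) := by
        intro n hn
        have hn' : (0:ℝ) < n := Nat.cast_pos.mpr hn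
        rw [sub_le_iff_le_add, ← add_div, le_div_iff₀ hn']
        calc x * n = (n:ℝ) * x := mul_comm _ _
          _ ≤ (⌊(n:ℝ)*x⌋:ℝ) + 1 := (Int.lt_floor_add_one _).le
      have hgr_tend : Tendsto (fun n : ℕ => ((⌊(n:ℝ)*x⌋:ℝ)/n)) atTop (nhds x) := by
        have hlow : Tendsto (fun n : ℕ => x - 1/(n:ℝ)) atTop (nhds x) := by
          have : Tendsto (fun n : ℕ => 1/(n:ℝ)) atTop (nhds 0) := tendsto_one_div_atTop_nhds_zero_nat
          have h2 := (tendsto_const_nhds (x := x) (f := atTop (α := ℕ))).sub this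
          simpa using h2
        refine tendsto_of_tendsto_of_tendsto_of_le_of_le' hlow tendsto_const_nhds ?_ ?_
        · filter_upwards [eventually_ge_atTop 1] with n hn
          exact hgr_lb n hn
        · exact Eventually.of_forall hgr_le
      -- the t-part is eventually constant
      obtain ⟨ε, hε, hεprop⟩ : ∃ ε : ℝ, 0 < ε ∧ ∀ s ∈ S, ¬ (x - ε < s ∧ s ≤ x) := by
        by_cases hP : (S.filter (· ≤ x)).Nonempty
        · set s0 := (S.filter (· ≤ x)).max' hP with hs0
          have hs0mem := (S.filter (· ≤ x)).max'_mem hP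
          have hs0S : s0 ∈ S := (Finset.mem_filter.1 hs0mem).1
          have hs0x : s0 ≤ x := (Finset.mem_filter.1 hs0mem).2
          have hs0ne : s0 ≠ x := fun h => hxS (h ▸ hs0S)
          have hs0lt : s0 < x := lt_of_le_of_ne hs0x hs0ne
          refine ⟨x - s0, by linarith, ?_⟩
          rintro s hsS ⟨h1, h2⟩
          have hsmem : s ∈ S.filter (· ≤ x) := Finset.mem_filter.2 ⟨hsS, h2⟩
          have hle : s ≤ s0 := by
            rw [hs0]
            exact Finset.le_max' _ s hsmem
          simp only [sub_sub_cancel] at h1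
          exact absurd hle (not_le.2 h1)
        · refine ⟨1, one_pos, ?_⟩
          rintro s hsS ⟨h1, h2⟩
          exact hP ⟨s, Finset.mem_filter.2 ⟨hsS, h2⟩⟩
      have hts : ∀ᶠ n : ℕ in atTop, t ((⌊(n:ℝ)*x⌋:ℝ)/n) = t x := by
        have hev1 : ∀ᶠ n : ℕ in atTop, 1/(n:ℝ) < ε :=
          tendsto_one_div_atTop_nhds_zero_nat.eventually_lt_const hε
        filter_upwards [hev1, eventually_ge_atTop 1] with n hn1 hn2
        refine hstep _ x (hgr_Icc n) (Ioo_subset_Icc_self hx) (hgr_le n) ?_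
        rintro s hsS ⟨h1, h2⟩
        refine hεprop s hsS ⟨?_, h2⟩
        calc x - ε < x - 1/(n:ℝ) := by linarith
          _ ≤ ((⌊(n:ℝ)*x⌋:ℝ)/n) := hgr_lb n hn2
          _ < s := h1
      -- the F-part converges by continuity
      have hFt : Tendsto (fun n : ℕ => F ((⌊(n:ℝ)*x⌋:ℝ)/n)) atTop (nhds (F x)) := by
        have hc : ContinuousWithinAt G (Icc (0:ℝ) 1) x := hGcont x (Ioo_subset_Icc_self hx)
        have hgrW : Tendsto (fun n : ℕ => ((⌊(n:ℝ)*x⌋:ℝ)/n)) atTop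
            (nhdsWithin x (Icc (0:ℝ) 1)) := by
          rw [tendsto_nhdsWithin_iff]
          exact ⟨hgr_tend, Eventually.of_forall hgr_Icc⟩
        have h3 : Tendsto (fun n : ℕ => G ((⌊(n:ℝ)*x⌋:ℝ)/n)) atTop (nhds (G x)) :=
          (hc.tendsto).comp hgrW
        have h4 : (fun n : ℕ => F ((⌊(n:ℝ)*x⌋:ℝ)/n)) = fun n : ℕ => G ((⌊(n:ℝ)*x⌋:ℝ)/n) :=
          funext fun n => hFG _ (hgr_Icc n)
        rw [h4, hFG x (Ioo_subset_Icc_self hx)]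
        exact h3
      have htend : Tendsto (fun n : ℕ => t ((⌊(n:ℝ)*x⌋:ℝ)/n) + F ((⌊(n:ℝ)*x⌋:ℝ)/n))
          atTop (nhds (t x + F x)) := by
        have h5 : Tendsto (fun n : ℕ => t x + F ((⌊(n:ℝ)*x⌋:ℝ)/n)) atTop
            (nhds (t x + F x)) := tendsto_const_nhds.add hFt
        refine h5.congr' ?_
        filter_upwards [hts] with n hn
        rw [hn]
      have hsubt : Tendsto (fun n : ℕ =>
          t ((⌊(n:ℝ)*x⌋:ℝ)/n) + F ((⌊(n:ℝ)*x⌋:ℝ)/n) - (t x + F x)) atTop (nhds 0) := by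
        have := htend.sub (tendsto_const_nhds (x := t x + F x) (f := atTop (α := ℕ)))
        simpa using this
      have := hsubt.pow 2
      simpa using this
    have := MeasureTheory.tendsto_integral_of_dominated_convergence (μ := volume.restrict (Ioo (0:ℝ) 1))
      (F := fun n (x:ℝ) => (t ((⌊(n:ℝ)*x⌋:ℝ)/n) + F ((⌊(n:ℝ)*x⌋:ℝ)/n) - (t x + F x)) ^ 2)
      (f := fun _ => (0:ℝ)) (fun _ => B) hmeas (integrable_const B) h_bound h_lim
    simpa using this
  · -- limsup bound
    set I : ℝ := ∫ x in Ioo (0:ℝ) 1, f' x ^ 2 with hIdef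
    have hI0 : 0 ≤ I := setIntegral_nonneg measurableSet_Ioo fun x _ => sq_nonneg _
    set L : ℝ := (S.card : ℝ) * γ + (μ^2)⁻¹ * I with hLdef
    set v : ℕ → ℝ := fun n => (S.card : ℝ) * γs n + ((μs n)^2)⁻¹ * I with hvdef
    have hv_tend : Tendsto v atTop (nhds L) := by
      have h1 : Tendsto (fun n => ((μs n)^2)⁻¹) atTop (nhds ((μ^2)⁻¹)) :=
        (hμs.pow 2).inv₀ (pow_ne_zero 2 hμ.ne')
      exact (tendsto_const_nhds.mul hγs).add (h1.mul tendsto_const_nhds)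
    have key : ∀ n : ℕ, 0 ≤ γs n → 0 < μs n →
        (∑ κ ∈ Finset.range (n-1),
          min (((n:ℝ)/(μs n)^2) *
            ((t ((⌊(n:ℝ)*(((κ:ℝ)+1)/n)⌋:ℝ)/n) + F ((⌊(n:ℝ)*(((κ:ℝ)+1)/n)⌋:ℝ)/n))
              - (t ((⌊(n:ℝ)*((κ:ℝ)/n)⌋:ℝ)/n) + F ((⌊(n:ℝ)*((κ:ℝ)/n)⌋:ℝ)/n)))^2) (γs n))
          ≤ v n := by
      intro n hγn hμn
      have hv0 : 0 ≤ v n := by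
        refine add_nonneg (mul_nonneg (Nat.cast_nonneg _) hγn) ?_
        exact mul_nonneg (inv_nonneg.2 (sq_nonneg _)) hI0
      rcases lt_or_ge n 2 with h2 | h2
      · have hn1 : n - 1 = 0 := by omega
        rw [hn1]
        simpa using hv0
      · have hn : 0 < n := by omega
        have hn' : (0:ℝ) < n := Nat.cast_pos.mpr hn
        -- rewrite the floors at grid points
        have hsum_eq : ∀ κ ∈ Finset.range (n-1),
            min (((n:ℝ)/(μs n)^2) *
              ((t ((⌊(n:ℝ)*(((κ:ℝ)+1)/n)⌋:ℝ)/n) + F ((⌊(n:ℝ)*(((κ:ℝ)+1)/n)⌋:ℝ)/n))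
                - (t ((⌊(n:ℝ)*((κ:ℝ)/n)⌋:ℝ)/n) + F ((⌊(n:ℝ)*((κ:ℝ)/n)⌋:ℝ)/n)))^2) (γs n)
            = min (((n:ℝ)/(μs n)^2) *
              ((t (((κ:ℝ)+1)/n) + F (((κ:ℝ)+1)/n)) - (t ((κ:ℝ)/n) + F ((κ:ℝ)/n)))^2) (γs n) := by
          intro κ hκ
          have e1 : ((⌊(n:ℝ)*(((κ:ℝ)+1)/n)⌋:ℝ)/n) = ((κ:ℝ)+1)/n := by
            have h := hfn_grid n hn (κ+1)
            push_cast at h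
            exact h
          rw [e1, hfn_grid n hn κ]
        rw [Finset.sum_congr rfl hsum_eq]
        -- basic facts about the subintervals
        have hsubIoo : ∀ κ ∈ Finset.range (n-1),
            Ioc ((κ:ℝ)/n) (((κ:ℝ)+1)/n) ⊆ Ioo (0:ℝ) 1 := by
          intro κ hκ y hy
          have hκ' : κ + 1 < n := by
            have := Finset.mem_range.1 hκ
            omega
          have hbl : ((κ:ℝ)+1)/n < 1 := by
            rw [div_lt_one hn']
            exact_mod_cast hκ'
          exact ⟨lt_of_le_of_lt (by positivity) hy.1, lt_of_le_of_lt hy.2 hbl⟩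
        have hIκ0 : ∀ κ : ℕ, 0 ≤ ∫ x in Ioc ((κ:ℝ)/n) (((κ:ℝ)+1)/n), f' x ^ 2 :=
          fun κ => setIntegral_nonneg measurableSet_Ioc fun x _ => sq_nonneg _
        -- pointwise bound on intervals without jumps
        have hptbound : ∀ κ ∈ Finset.range (n-1),
            (¬ ∃ s ∈ S, (κ:ℝ)/n < s ∧ s ≤ ((κ:ℝ)+1)/n) →
            min (((n:ℝ)/(μs n)^2) *
              ((t (((κ:ℝ)+1)/n) + F (((κ:ℝ)+1)/n)) - (t ((κ:ℝ)/n) + F ((κ:ℝ)/n)))^2) (γs n)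
            ≤ ((μs n)^2)⁻¹ * ∫ x in Ioc ((κ:ℝ)/n) (((κ:ℝ)+1)/n), f' x ^ 2 := by
          intro κ hκ hns
          have hκ1 : κ + 1 < n := by
            have := Finset.mem_range.1 hκ
            omega
          have hbl : ((κ:ℝ)+1)/n < 1 := by
            rw [div_lt_one hn']
            exact_mod_cast hκ1
          have haIcc : (κ:ℝ)/n ∈ Icc (0:ℝ) 1 := by
            constructor
            · positivity
            · rw [div_le_one hn']
              exact_mod_cast (by omega : κ ≤ n)
          have hbIcc : ((κ:ℝ)+1)/n ∈ Icc (0:ℝ) 1 := ⟨by positivity, hbl.le⟩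
          have hab : (κ:ℝ)/n ≤ ((κ:ℝ)+1)/n :=
            div_le_div_same_pos (by linarith) hn'
          have htt : t ((κ:ℝ)/n) = t (((κ:ℝ)+1)/n) := by
            refine hstep _ _ haIcc hbIcc hab ?_
            rintro s hsS ⟨h1', h2'⟩
            exact hns ⟨s, hsS, h1', h2'⟩
          have hint1 : IntervalIntegrable f' volume 0 ((κ:ℝ)/n) := by
            rw [intervalIntegrable_iff_integrableOn_Ioc_of_le haIcc.1]
            refine hf'int.mono_set fun y hy => ⟨hy.1, ?_⟩
            exact lt_of_le_of_lt (hy.2.trans hab) hbl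
          have hint2 : IntervalIntegrable f' volume 0 (((κ:ℝ)+1)/n) := by
            rw [intervalIntegrable_iff_integrableOn_Ioc_of_le hbIcc.1]
            refine hf'int.mono_set fun y hy => ⟨hy.1, lt_of_le_of_lt hy.2 hbl⟩
          have hFd : F (((κ:ℝ)+1)/n) - F ((κ:ℝ)/n)
              = ∫ x in Ioc ((κ:ℝ)/n) (((κ:ℝ)+1)/n), f' x := by
            rw [hF _ hbIcc, hF _ haIcc]
            have hsub := intervalIntegral.integral_interval_sub_left hint2 hint1
            rw [show (F 0 + ∫ u in (0:ℝ)..(((κ:ℝ)+1)/n), f' u)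
                - (F 0 + ∫ u in (0:ℝ)..((κ:ℝ)/n), f' u)
                = (∫ u in (0:ℝ)..(((κ:ℝ)+1)/n), f' u)
                  - ∫ u in (0:ℝ)..((κ:ℝ)/n), f' u by ring, hsub,
              intervalIntegral.integral_of_le hab]
          have hmem2 : MemLp f' 2 (volume.restrict (Ioc ((κ:ℝ)/n) (((κ:ℝ)+1)/n))) := by
            rw [← Measure.restrict_restrict_of_subset (hsubIoo κ hκ)]
            exact hf'.restrict _
          have hcs := cs_aux hab hmem2
          have hlen : ((κ:ℝ)+1)/n - (κ:ℝ)/n = 1/n := by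
            rw [div_sub_div_same]
            norm_num
          rw [hlen] at hcs
          have hd : (t (((κ:ℝ)+1)/n) + F (((κ:ℝ)+1)/n)) - (t ((κ:ℝ)/n) + F ((κ:ℝ)/n))
              = ∫ x in Ioc ((κ:ℝ)/n) (((κ:ℝ)+1)/n), f' x := by
            rw [← htt, ← hFd]
            ring
          have hcoef : (0:ℝ) ≤ (n:ℝ)/(μs n)^2 := by positivity
          calc min (((n:ℝ)/(μs n)^2) *
              ((t (((κ:ℝ)+1)/n) + F (((κ:ℝ)+1)/n)) - (t ((κ:ℝ)/n) + F ((κ:ℝ)/n)))^2) (γs n)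
              ≤ ((n:ℝ)/(μs n)^2) *
                ((t (((κ:ℝ)+1)/n) + F (((κ:ℝ)+1)/n)) - (t ((κ:ℝ)/n) + F ((κ:ℝ)/n)))^2 :=
                min_le_left _ _
            _ = ((n:ℝ)/(μs n)^2) * (∫ x in Ioc ((κ:ℝ)/n) (((κ:ℝ)+1)/n), f' x)^2 := by
                rw [hd]
            _ ≤ ((n:ℝ)/(μs n)^2) *
                ((1/(n:ℝ)) * ∫ x in Ioc ((κ:ℝ)/n) (((κ:ℝ)+1)/n), f' x ^ 2) :=
                mul_le_mul_of_nonneg_left hcs hcoef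
            _ = ((μs n)^2)⁻¹ * ∫ x in Ioc ((κ:ℝ)/n) (((κ:ℝ)+1)/n), f' x ^ 2 := by
                field_simp
        -- the set of jump intervals
        set J := (Finset.range (n-1)).filter
          (fun κ : ℕ => ∃ s ∈ S, ((κ:ℕ):ℝ)/n < s ∧ s ≤ (((κ:ℕ):ℝ)+1)/n) with hJ
        have hJcard : J.card ≤ S.card := by
          have hex : ∀ κ : ℕ, κ ∈ J → ∃ s, s ∈ S ∧ (((κ:ℕ):ℝ)/n < s ∧ s ≤ (((κ:ℕ):ℝ)+1)/n) := by
            intro κ hκ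
            obtain ⟨s, hs1, hs2⟩ := (Finset.mem_filter.1 hκ).2
            exact ⟨s, hs1, hs2⟩
          set g : ℕ → ℝ := fun κ =>
            if h : ∃ s, s ∈ S ∧ (((κ:ℕ):ℝ)/n < s ∧ s ≤ (((κ:ℕ):ℝ)+1)/n) then h.choose else 0
            with hg
          have hgprop : ∀ κ ∈ J, g κ ∈ S ∧ ((κ:ℝ)/n < g κ ∧ g κ ≤ ((κ:ℝ)+1)/n) := by
            intro κ hκ
            have h := hex κ hκ
            simp only [hg, dif_pos h]
            exact h.choose_spec
          refine Finset.card_le_card_of_injOn g (fun κ hκ => (hgprop κ hκ).1) ?_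
          intro κ1 h1 κ2 h2 heq
          by_contra hne
          have key2 : ∀ κa κb : ℕ, κa ∈ J → κb ∈ J → κa < κb → g κa = g κb → False := by
            intro κa κb ha hb hlt hgeq
            have e1 : g κa ≤ ((κa:ℝ)+1)/n := (hgprop κa ha).2.2
            have e2 : ((κb:ℝ))/n < g κb := (hgprop κb hb).2.1
            have e3 : ((κa:ℝ)+1)/n ≤ (κb:ℝ)/n := by
              refine div_le_div_same_pos ?_ hn'
              exact_mod_cast Nat.succ_le_of_lt hlt
            rw [hgeq] at e1
            linarith
          rcases lt_or_gt_of_ne hne with h | h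
          · exact key2 κ1 κ2 (Finset.mem_coe.1 h1) (Finset.mem_coe.1 h2) h heq
          · exact key2 κ2 κ1 (Finset.mem_coe.1 h2) (Finset.mem_coe.1 h1) h heq.symm
        -- union of intervals
        have hdisj : (↑(Finset.range (n-1)) : Set ℕ).Pairwise
            (Function.onFun Disjoint fun κ : ℕ => Ioc ((κ:ℝ)/n) (((κ:ℝ)+1)/n)) := by
          intro κ1 _ κ2 _ hne
          have hd12 : ∀ κa κb : ℕ, κa < κb →
              Disjoint (Ioc ((κa:ℝ)/n) (((κa:ℝ)+1)/n)) (Ioc ((κb:ℝ)/n) (((κb:ℝ)+1)/n)) := by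
            intro κa κb hlt
            apply Set.Ioc_disjoint_Ioc.2
            have e3 : ((κa:ℝ)+1)/n ≤ (κb:ℝ)/n := by
              refine div_le_div_same_pos ?_ hn'
              exact_mod_cast Nat.succ_le_of_lt hlt
            calc min (((κa:ℝ)+1)/n) (((κb:ℝ)+1)/n) ≤ ((κa:ℝ)+1)/n := min_le_left _ _
              _ ≤ (κb:ℝ)/n := e3
              _ ≤ max ((κa:ℝ)/n) ((κb:ℝ)/n) := le_max_right _ _
          rcases lt_or_gt_of_ne hne with h | h
          · exact hd12 κ1 κ2 h
          · exact (hd12 κ2 κ1 h).symm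
        have hunion : (∑ κ ∈ Finset.range (n-1),
            ∫ x in Ioc ((κ:ℝ)/n) (((κ:ℝ)+1)/n), f' x ^ 2) ≤ I := by
          have heq := integral_biUnion_finset (μ := volume) (f := fun x => f' x ^ 2)
            (Finset.range (n-1)) (fun κ _ => measurableSet_Ioc) hdisj
            (fun κ hκ => hsqint.mono_set (hsubIoo κ hκ))
          rw [← heq]
          refine setIntegral_mono_set hsqint (ae_of_all _ fun y => sq_nonneg _) ?_
          exact (Set.iUnion₂_subset fun κ hκ => hsubIoo κ hκ).eventuallyLE
        -- put everything together
        calc (∑ κ ∈ Finset.range (n-1),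
            min (((n:ℝ)/(μs n)^2) *
              ((t (((κ:ℝ)+1)/n) + F (((κ:ℝ)+1)/n)) - (t ((κ:ℝ)/n) + F ((κ:ℝ)/n)))^2) (γs n))
            = (∑ κ ∈ J,
                min (((n:ℝ)/(μs n)^2) *
                  ((t (((κ:ℝ)+1)/n) + F (((κ:ℝ)+1)/n)) - (t ((κ:ℝ)/n) + F ((κ:ℝ)/n)))^2) (γs n))
              + (∑ κ ∈ (Finset.range (n-1)).filter
                  (fun κ : ℕ => ¬ ∃ s ∈ S, ((κ:ℕ):ℝ)/n < s ∧ s ≤ (((κ:ℕ):ℝ)+1)/n),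
                min (((n:ℝ)/(μs n)^2) *
                  ((t (((κ:ℝ)+1)/n) + F (((κ:ℝ)+1)/n)) - (t ((κ:ℝ)/n) + F ((κ:ℝ)/n)))^2) (γs n)) :=
              (Finset.sum_filter_add_sum_filter_not (Finset.range (n-1))
                (fun κ : ℕ => ∃ s ∈ S, ((κ:ℕ):ℝ)/n < s ∧ s ≤ (((κ:ℕ):ℝ)+1)/n) _).symm
          _ ≤ (J.card : ℝ) * γs n
              + ∑ κ ∈ (Finset.range (n-1)).filter
                  (fun κ : ℕ => ¬ ∃ s ∈ S, ((κ:ℕ):ℝ)/n < s ∧ s ≤ (((κ:ℕ):ℝ)+1)/n),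
                ((μs n)^2)⁻¹ * ∫ x in Ioc ((κ:ℝ)/n) (((κ:ℝ)+1)/n), f' x ^ 2 := by
              refine add_le_add ?_ ?_
              · calc (∑ κ ∈ J,
                    min (((n:ℝ)/(μs n)^2) *
                      ((t (((κ:ℝ)+1)/n) + F (((κ:ℝ)+1)/n)) - (t ((κ:ℝ)/n) + F ((κ:ℝ)/n)))^2)
                      (γs n))
                    ≤ ∑ _κ ∈ J, γs n := Finset.sum_le_sum fun κ _ => min_le_right _ _
                  _ = (J.card : ℝ) * γs n := by rw [Finset.sum_const, nsmul_eq_mul]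
              · refine Finset.sum_le_sum fun κ hκ => ?_
                exact hptbound κ (Finset.mem_filter.1 hκ).1 (Finset.mem_filter.1 hκ).2
          _ ≤ (S.card : ℝ) * γs n + ((μs n)^2)⁻¹ * I := by
              refine add_le_add ?_ ?_
              · exact mul_le_mul_of_nonneg_right (by exact_mod_cast hJcard) hγn
              · rw [← Finset.mul_sum]
                refine mul_le_mul_of_nonneg_left ?_ (inv_nonneg.2 (sq_nonneg _))
                refine le_trans ?_ hunion
                exact Finset.sum_le_sum_of_subset_of_nonneg
                  (Finset.filter_subset _ _) (fun κ _ _ => hIκ0 κ)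
    have hev : ∀ᶠ n : ℕ in atTop,
        (∑ κ ∈ Finset.range (n-1),
          min (((n:ℝ)/(μs n)^2) *
            ((t ((⌊(n:ℝ)*(((κ:ℝ)+1)/n)⌋:ℝ)/n) + F ((⌊(n:ℝ)*(((κ:ℝ)+1)/n)⌋:ℝ)/n))
              - (t ((⌊(n:ℝ)*((κ:ℝ)/n)⌋:ℝ)/n) + F ((⌊(n:ℝ)*((κ:ℝ)/n)⌋:ℝ)/n)))^2) (γs n))
          ≤ v n := by
      filter_upwards [hγs.eventually_const_lt hγ, hμs.eventually_const_lt hμ] with n h1 h2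
      exact key n h1.le h2
    have hband : IsBoundedUnder (· ≤ ·) atTop v := hv_tend.isBoundedUnder_le
    have hcob : IsCoboundedUnder (· ≤ ·) atTop (fun n : ℕ =>
        ∑ κ ∈ Finset.range (n-1),
          min (((n:ℝ)/(μs n)^2) *
            ((t ((⌊(n:ℝ)*(((κ:ℝ)+1)/n)⌋:ℝ)/n) + F ((⌊(n:ℝ)*(((κ:ℝ)+1)/n)⌋:ℝ)/n))
              - (t ((⌊(n:ℝ)*((κ:ℝ)/n)⌋:ℝ)/n) + F ((⌊(n:ℝ)*((κ:ℝ)/n)⌋:ℝ)/n)))^2) (γs n)) := by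
      refine isCoboundedUnder_le_of_eventually_le atTop (x := 0) ?_
      filter_upwards [hγs.eventually_const_lt hγ] with n hn
      exact Finset.sum_nonneg fun κ _ => le_min (by positivity) hn.le
    have hfinal : L = γ * S.card + μ⁻¹ ^ 2 * ∫ x in (0:ℝ)..1, (f' x) ^ 2 := by
      have hii : ∫ x in (0:ℝ)..1, (f' x) ^ 2 = I := by
        rw [intervalIntegral.integral_of_le zero_le_one]
        exact integral_Ioc_eq_integral_Ioo
      rw [hLdef, hii, inv_pow]
      ring
    calc Filter.limsup (fun n : ℕ =>
        ∑ κ ∈ Finset.range (n-1),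
          min (((n:ℝ)/(μs n)^2) *
            ((t ((⌊(n:ℝ)*(((κ:ℝ)+1)/n)⌋:ℝ)/n) + F ((⌊(n:ℝ)*(((κ:ℝ)+1)/n)⌋:ℝ)/n))
              - (t ((⌊(n:ℝ)*((κ:ℝ)/n)⌋:ℝ)/n) + F ((⌊(n:ℝ)*((κ:ℝ)/n)⌋:ℝ)/n)))^2) (γs n)) atTop
        ≤ Filter.limsup v atTop := Filter.limsup_le_limsup hev hcob hband
      _ = L := hv_tend.limsup_eq
      _ = γ * S.card + μ⁻¹ ^ 2 * ∫ x in (0:ℝ)..1, (f' x) ^ 2 := hfinal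
end
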